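/- arXiv:1812.01310 — 9 statements merged into one kernel-verified Lean document; each statement's English description precedes it below -/
import Mathlib

section
/- Let M be an m×n integer matrix, let c ∈ ℝ^m have all entries nonzero, let k ∈ ℝ, and let δ ∈ {0,1}^n. Then the following are equivalent. (a) There exists g ∈ ℝ^n with all entries nonzero and sign(g_j) = (−1)^{δ_j} for every j, such that the vector X ∈ ℝ^m with entries X_a = c_a² · ∏_{j=1}^n g_j^{M_{aj}} satisfies Mᵀ X = (k, …, k). (b) There exists X ∈ ℝ^m such that: (K) Mᵀ X = (k, …, k); (H) every entry of X is nonzero; (L) sign(X_a) = (−1)^{Σ_j M_{aj} δ_j} for every a; (P) for every α ∈ ℝ^m with Mᵀ α = 0, ∏_a |X_a|^{α_a} = ∏_a |c_a|^{2 α_a}. -/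
/-!
Nonzero reals of prescribed sign are parametrised by logarithms: `g = (-1)^δ * exp t` and
`X = c² * ((-1)^{Mδ} * exp s)`. In these coordinates `e^M(g) = (-1)^{Mδ} * exp (M t)` and
`∏ |X_a|^{α_a} = ∏ |c_a|^{2 α_a} * exp (α ⬝ s)`, so (H) and (L) are automatic and (P) says that
`s ⊥ ker Mᵀ`, i.e. `s ∈ range M`. Both (a) and (b) therefore say that (K) holds for
`X = c² * ((-1)^{Mδ} * exp (M t))` for some `t`.
-/

namespace Matrix

variable {K m n : Type*} [Field K] [Fintype m] [Fintype n]

theorem exists_mulVec_eq_iff_forall_dotProduct_eq_zero (A : Matrix m n K) (s : m → K) :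
    (∃ t, A *ᵥ t = s) ↔ ∀ α, Aᵀ *ᵥ α = 0 → α ⬝ᵥ s = 0 := by
  classical
  refine ⟨?_, fun h => ?_⟩
  · rintro ⟨t, rfl⟩ α hα
    rw [dotProduct_mulVec, ← mulVec_transpose, hα, zero_dotProduct]
  · by_contra hs
    obtain ⟨f, hfs, hf⟩ := Submodule.exists_le_ker_of_notMem (p := LinearMap.range A.mulVecLin)
      (v := s) (by simpa using hs)
    set α : m → K := fun i => f (Pi.single i 1)
    have hfα : ∀ x, f x = α ⬝ᵥ x := fun x => by
      rw [LinearMap.pi_apply_eq_sum_univ f x]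
      simp only [α, dotProduct, smul_eq_mul, mul_comm]
      congr! with i
      simp [Pi.single_apply, eq_comm]
    refine hfs ((hfα s).trans (h α ?_))
    ext j
    have := hf (LinearMap.mem_range_self A.mulVecLin (Pi.single j 1))
    rw [LinearMap.mem_ker, hfα, mulVecLin_apply, dotProduct_mulVec, ← mulVec_transpose] at this
    simpa using this

end Matrix

theorem neg_one_zpow_mul_self {α : Type*} [DivisionCommMonoid α] [HasDistribNeg α] (z : ℤ) :
    (-1 : α) ^ z * (-1) ^ z = 1 := by
  rw [← mul_zpow, neg_one_mul, neg_neg, one_zpow]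

theorem Finset.prod_zpow_eq_zpow_sum₀ {G₀ ι : Type*} [CommGroupWithZero G₀] {a : G₀} (ha : a ≠ 0)
    (s : Finset ι) (f : ι → ℤ) : ∏ i ∈ s, a ^ f i = a ^ (∑ i ∈ s, f i) := by
  classical
  induction s using Finset.cons_induction with
  | empty => simp
  | cons i s hi ih => rw [Finset.sum_cons, Finset.prod_cons, zpow_add₀ ha, ih]

namespace Real

theorem exp_int_mul (x : ℝ) (n : ℤ) : exp (n * x) = exp x ^ n := by
  rw [← rpow_intCast, ← exp_mul, mul_comm]

theorem sign_mul_neg_one_zpow_of_pos {w : ℝ} (hw : 0 < w) (z : ℤ) :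
    Real.sign (w * (-1) ^ z) = (-1) ^ z := by
  rcases Int.even_or_odd z with h | h
  · rw [h.neg_one_zpow, mul_one, sign_of_pos hw]
  · rw [h.neg_one_zpow, mul_neg_one, sign_of_neg (neg_neg_of_pos hw)]

theorem ne_zero_and_sign_eq_neg_one_zpow_iff_exists_exp {x w : ℝ} (hw : 0 < w) (z : ℤ) :
    x ≠ 0 ∧ Real.sign x = (-1) ^ z ↔ ∃ r, x = w * ((-1) ^ z * exp r) := by
  constructor
  · rintro ⟨hx, hsign⟩
    have hpos : 0 < (-1) ^ z * x / w := by
      rw [← hsign]; exact div_pos (sign_mul_pos_of_ne_zero x hx) hw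
    refine ⟨log ((-1) ^ z * x / w), ?_⟩
    calc x = ((-1) ^ z * (-1) ^ z) * x := by rw [neg_one_zpow_mul_self, one_mul]
      _ = w * ((-1) ^ z * exp (log ((-1) ^ z * x / w))) := by
        rw [exp_log hpos]; field_simp
  · rintro ⟨r, rfl⟩
    refine ⟨by positivity, ?_⟩
    rw [show w * ((-1) ^ z * exp r) = w * exp r * (-1) ^ z by ring]
    exact sign_mul_neg_one_zpow_of_pos (mul_pos hw (exp_pos r)) z

theorem abs_sq_mul_neg_one_zpow_mul_exp_rpow (c : ℝ) (z : ℤ) (s α : ℝ) :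
    |c ^ 2 * ((-1) ^ z * exp s)| ^ α = |c| ^ (2 * α) * exp (α * s) := by
  rw [abs_mul, abs_mul, abs_neg_one_zpow, one_mul, abs_exp, abs_pow,
    mul_rpow (by positivity) (exp_pos s).le, ← exp_mul, mul_comm s, rpow_mul (abs_nonneg c),
    rpow_two]

theorem prod_abs_sq_mul_neg_one_zpow_mul_exp_rpow_eq_iff {ι : Type*} [Fintype ι] {c : ι → ℝ}
    (hc : ∀ a, c a ≠ 0) (z : ι → ℤ) (s α : ι → ℝ) :
    ∏ a, |c a ^ 2 * ((-1) ^ z a * exp (s a))| ^ α a = ∏ a, |c a| ^ (2 * α a) ↔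
      α ⬝ᵥ s = 0 := by
  have hc' : ∏ a, |c a| ^ (2 * α a) ≠ 0 :=
    Finset.prod_ne_zero_iff.mpr fun a _ => (rpow_pos_of_pos (abs_pos.mpr (hc a)) _).ne'
  simp only [abs_sq_mul_neg_one_zpow_mul_exp_rpow, Finset.prod_mul_distrib, ← exp_sum,
    mul_eq_left₀ hc', exp_eq_one_iff]
  rfl

theorem prod_neg_one_zpow_mul_exp_zpow {ι : Type*} (s : Finset ι) (e δ : ι → ℤ) (t : ι → ℝ) :
    ∏ j ∈ s, ((-1 : ℝ) ^ δ j * exp (t j)) ^ e j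
      = (-1) ^ (∑ j ∈ s, e j * δ j) * exp (∑ j ∈ s, e j * t j) := by
  simp only [mul_zpow, Finset.prod_mul_distrib, exp_sum, ← exp_int_mul, ← zpow_mul,
    mul_comm (δ _), Finset.prod_zpow_eq_zpow_sum₀ (by norm_num : (-1 : ℝ) ≠ 0)]

end Real

theorem diagonal_einstein_criterion_general (m n : ℕ) (M : Matrix (Fin m) (Fin n) ℤ)
    (c : Fin m → ℝ) (hc : ∀ a, c a ≠ 0) (k : ℝ)
    (δ : Fin n → ℤ) :
    (∃ g : Fin n → ℝ, (∀ j, g j ≠ 0) ∧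
        (∀ j, Real.sign (g j) = (-1 : ℝ) ^ δ j) ∧
        (∀ j', ∑ a, (M a j' : ℝ) * (c a ^ 2 * ∏ j, g j ^ M a j) = k)) ↔
      (∃ X : Fin m → ℝ,
        (∀ j, ∑ a, (M a j : ℝ) * X a = k) ∧
        (∀ a, X a ≠ 0) ∧
        (∀ a, Real.sign (X a) = (-1 : ℝ) ^ (∑ j, M a j * δ j)) ∧
        (∀ α : Fin m → ℝ, (∀ j, ∑ a, (M a j : ℝ) * α a = 0) →
          ∏ a, |X a| ^ α a = ∏ a, |c a| ^ (2 * α a))) := by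
  have hc2 : ∀ a, 0 < c a ^ 2 := fun a => sq_pos_of_ne_zero (hc a)
  constructor
  · rintro ⟨g, hg0, hgs, hK⟩
    choose t ht using fun j =>
      (Real.ne_zero_and_sign_eq_neg_one_zpow_iff_exists_exp one_pos (δ j)).mp ⟨hg0 j, hgs j⟩
    obtain rfl : g = fun j => (-1) ^ δ j * Real.exp (t j) :=
      funext fun j => (ht j).trans (one_mul _)
    simp only [Real.prod_neg_one_zpow_mul_exp_zpow] at hK
    have hX := fun a => (Real.ne_zero_and_sign_eq_neg_one_zpow_iff_exists_exp (hc2 a)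
      (∑ j, M a j * δ j)).mpr ⟨∑ j, M a j * t j, rfl⟩
    refine ⟨_, hK, fun a => (hX a).1, fun a => (hX a).2, fun α hα => ?_⟩
    rw [Real.prod_abs_sq_mul_neg_one_zpow_mul_exp_rpow_eq_iff hc]
    exact (Matrix.exists_mulVec_eq_iff_forall_dotProduct_eq_zero (M.map Int.cast) _).mp
      ⟨t, rfl⟩ α (funext hα)
  · rintro ⟨X, hK, hH, hL, hP⟩
    choose s hs using fun a =>
      (Real.ne_zero_and_sign_eq_neg_one_zpow_iff_exists_exp (hc2 a) _).mp ⟨hH a, hL a⟩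
    obtain rfl := funext hs
    obtain ⟨t, ht⟩ := (Matrix.exists_mulVec_eq_iff_forall_dotProduct_eq_zero (M.map Int.cast)
      s).mpr fun α hα =>
        (Real.prod_abs_sq_mul_neg_one_zpow_mul_exp_rpow_eq_iff hc _ s α).mp (hP α (congrFun hα))
    have hg := fun j =>
      (Real.ne_zero_and_sign_eq_neg_one_zpow_iff_exists_exp one_pos (δ j)).mpr
        ⟨t j, (one_mul _).symm⟩
    refine ⟨fun j => (-1) ^ δ j * Real.exp (t j), fun j => (hg j).1, fun j => (hg j).2,
      fun j => ?_⟩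
    simp only [Real.prod_neg_one_zpow_mul_exp_zpow, ← hK j, ← ht]
    rfl

/-- Criterion for existence of a diagonal Einstein metric on a nice nilpotent Lie algebra,
in terms of the root matrix `M`, structure constants `c`, cosmological constant `k` and
signature `δ`. -/
theorem diagonal_einstein_criterion (m n : ℕ) (M : Matrix (Fin m) (Fin n) ℤ)
    (c : Fin m → ℝ) (hc : ∀ a, c a ≠ 0) (k : ℝ)
    (δ : Fin n → ℤ) (hδ : ∀ j, δ j = 0 ∨ δ j = 1) :
    (∃ g : Fin n → ℝ, (∀ j, g j ≠ 0) ∧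
        (∀ j, Real.sign (g j) = (-1 : ℝ) ^ δ j) ∧
        (∀ j', ∑ a, (M a j' : ℝ) * (c a ^ 2 * ∏ j, g j ^ M a j) = k)) ↔
      (∃ X : Fin m → ℝ,
        (∀ j, ∑ a, (M a j : ℝ) * X a = k) ∧
        (∀ a, X a ≠ 0) ∧
        (∀ a, Real.sign (X a) = (-1 : ℝ) ^ (∑ j, M a j * δ j)) ∧
        (∀ α : Fin m → ℝ, (∀ j, ∑ a, (M a j : ℝ) * α a = 0) →
          ∏ a, |X a| ^ α a = ∏ a, |c a| ^ (2 * α a))) :=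
  diagonal_einstein_criterion_general m n M c hc k δ
end

section
/- Let 𝔤 be a real nilpotent Lie algebra with a nice basis (e_1,…,e_n), and for each pair i ≠ j with [e_i,e_j] ≠ 0 write [e_i,e_j] = c_{ij}·e_{d(i,j)} with c_{ij} ≠ 0. Let g_1,…,g_n be nonzero real numbers and let ⟨·,·⟩ be the diagonal metric with ⟨e_i,e_i⟩ = g_i and ⟨e_i,e_j⟩ = 0 for i ≠ j. Then the Ricci tensor of ⟨·,·⟩ is diagonal in this basis: ric(e_k,e_l) = 0 for all k ≠ l, and for every k, ric(e_k,e_k) = (1/2)·Σ_{i<j, d(i,j)=k} c_{ij}² · g_k² / (g_i g_j) − (1/2)·Σ_{i: [e_k,e_i]≠0} c_{ki}² · g_{d(k,i)} / g_i. -/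
open Classical

/-- A basis of a real Lie algebra is nice if every bracket of two basis vectors is a
multiple of a basis vector, and for all `i, k` there is at most one `j` such that the
coefficient of `e k` in `⁅e i, e j⁆` is nonzero. -/
def IsNiceBasis {L : Type} [LieRing L] [LieAlgebra ℝ L] {ι : Type}
    (e : Module.Basis ι ℝ L) : Prop :=
  (∀ i j, ∃ (k : ι) (a : ℝ), ⁅e i, e j⁆ = a • e k) ∧
  (∀ i k j j', e.repr ⁅e i, e j⁆ k ≠ 0 → e.repr ⁅e i, e j'⁆ k ≠ 0 → j = j')

/-- The expression for the Ricci tensor of a metric `B` on a nilpotent Lie algebra,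
computed from a basis `v` with metric-dual family `u`. -/
noncomputable def ricci {L : Type} [LieRing L] [LieAlgebra ℝ L] {ι : Type} [Fintype ι]
    (B : LinearMap.BilinForm ℝ L) (v u : ι → L) (x y : L) : ℝ :=
  -(1 / 2 : ℝ) * ∑ i, B ⁅x, v i⁆ ⁅y, u i⁆
    + (1 / 4 : ℝ) * ∑ i, ∑ j, B ⁅v i, v j⁆ x * B ⁅u i, u j⁆ y

/-- `u` is the metric-dual family of `v` with respect to `B`: `B (v i) (u j) = δ_ij`. -/
def IsDualPair {L : Type} [LieRing L] [LieAlgebra ℝ L] {ι : Type} [Fintype ι]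
    (B : LinearMap.BilinForm ℝ L) (v u : ι → L) : Prop :=
  ∀ i j, B (v i) (u j) = if i = j then (1 : ℝ) else 0

/-!
Expanding the dual pair `(v, u)` in the orthogonal basis `e` shows that
`∑ᵢ F (vᵢ) (uᵢ) = ∑ₖ F (eₖ) (eₖ) / gₖ` for every bilinear `F`, so the Ricci tensor becomes a sum
over brackets of basis vectors. For `k ≠ l` both sums vanish termwise:
`⟨[eₖ, eᵢ], [eₗ, eᵢ]⟩ = 0` because niceness forbids `[eᵢ, eₖ]` and `[eᵢ, eₗ]` from having a
common basis direction, and `⟨[eᵢ, eⱼ], eₖ⟩ ⟨[eᵢ, eⱼ], eₗ⟩ = 0` because `[eᵢ, eⱼ]` is a multiple of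
a single basis vector. On the diagonal each term is read off from `[eᵢ, eⱼ] = cᵢⱼ e_{d(i,j)}`,
after the double sum has been folded onto `i < j` using the antisymmetry of the bracket.
-/

section NiceBasis

variable {L : Type} [LieRing L] [LieAlgebra ℝ L] {ι : Type} {e : Module.Basis ι ℝ L}

lemma IsNiceBasis.repr_lie_mul_repr_lie_eq_zero (he : IsNiceBasis e) {p q : ι} (hpq : p ≠ q)
    (i m : ι) :
    e.repr ⁅e p, e i⁆ m * e.repr ⁅e q, e i⁆ m = 0 := by
  by_contra h
  rw [← lie_skew, ← lie_skew (e q), map_neg, map_neg, Finsupp.neg_apply, Finsupp.neg_apply,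
    neg_mul_neg] at h
  exact hpq (he.2 i m p q (left_ne_zero_of_mul h) (right_ne_zero_of_mul h))

lemma IsNiceBasis.repr_mul_repr_eq_zero (he : IsNiceBasis e) {p q : ι} (hpq : p ≠ q)
    (i j : ι) :
    e.repr ⁅e i, e j⁆ p * e.repr ⁅e i, e j⁆ q = 0 := by
  obtain ⟨m, a, h⟩ := he.1 i j
  rcases eq_or_ne m p with rfl | hmp
  · simp [h, hpq]
  · simp [h, Finsupp.single_apply, hmp]

end NiceBasis

section OrthogonalBasis

variable {L : Type} [LieRing L] [LieAlgebra ℝ L] {B : LinearMap.BilinForm ℝ L}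
  {κ : Type} [Fintype κ] [DecidableEq κ] {e : Module.Basis κ ℝ L} {g : κ → ℝ}
  {ι : Type} [Fintype ι] {v : Module.Basis ι ℝ L} {u : ι → L}

lemma apply_eq_sum_repr_mul_repr (hB : ∀ i j, B (e i) (e j) = if i = j then g i else 0)
    (x y : L) : B x y = ∑ m, g m * e.repr x m * e.repr y m := by
  conv_lhs => rw [← e.sum_repr x, ← e.sum_repr y]
  simp only [map_sum, map_smul, LinearMap.sum_apply, LinearMap.smul_apply, hB, smul_eq_mul,
    mul_ite, mul_zero, Finset.sum_ite_eq', Finset.mem_univ, if_true]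
  exact Finset.sum_congr rfl fun m _ => by ring

lemma apply_basis_eq_mul_repr (hB : ∀ i j, B (e i) (e j) = if i = j then g i else 0)
    (x : L) (j : κ) : B x (e j) = g j * e.repr x j := by
  simp [apply_eq_sum_repr_mul_repr hB, Finsupp.single_apply]

lemma basis_apply_eq_mul_repr (hB : ∀ i j, B (e i) (e j) = if i = j then g i else 0)
    (x : L) (j : κ) : B (e j) x = g j * e.repr x j := by
  simp [apply_eq_sum_repr_mul_repr hB, Finsupp.single_apply]

lemma IsDualPair.apply_eq_repr (hvu : IsDualPair B v u) (x : L) (i : ι) :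
    B x (u i) = v.repr x i := by
  have : B.flip (u i) = v.coord i := v.ext fun j => by
    simp [hvu j i, Finsupp.single_apply, eq_comm]
  exact LinearMap.congr_fun this x

lemma IsDualPair.sum_repr_smul (hvu : IsDualPair B v u)
    (hB : ∀ i j, B (e i) (e j) = if i = j then g i else 0)
    (hg : ∀ i, g i ≠ 0) (k : κ) : ∑ i, e.repr (v i) k • u i = (g k)⁻¹ • e k := by
  refine e.ext_elem fun j => mul_left_cancel₀ (hg j) ?_
  rw [← basis_apply_eq_mul_repr hB, ← basis_apply_eq_mul_repr hB]
  simp only [map_sum, map_smul, smul_eq_mul, hvu.apply_eq_repr, hB]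
  have expand : ∑ i, e.repr (v i) k * v.repr (e j) i = e.repr (e j) k := by
    conv_rhs => rw [← v.sum_repr (e j)]
    simp only [map_sum, map_smul, Finsupp.coe_finsetSum, Finset.sum_apply, Finsupp.smul_apply,
      smul_eq_mul, mul_comm]
  rw [expand]
  rcases eq_or_ne j k with rfl | hjk
  · simp [hg j]
  · simp [hjk]

lemma IsDualPair.sum_apply_eq (hvu : IsDualPair B v u)
    (hB : ∀ i j, B (e i) (e j) = if i = j then g i else 0)
    (hg : ∀ i, g i ≠ 0) (F : L →ₗ[ℝ] L →ₗ[ℝ] ℝ) :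
    ∑ i, F (v i) (u i) = ∑ k, (g k)⁻¹ * F (e k) (e k) :=
  calc ∑ i, F (v i) (u i) = ∑ i, F (∑ k, e.repr (v i) k • e k) (u i) := by
        simp only [e.sum_repr]
    _ = ∑ k, F (e k) (∑ i, e.repr (v i) k • u i) := by
        simp only [map_sum, map_smul, LinearMap.sum_apply, LinearMap.smul_apply]
        exact Finset.sum_comm
    _ = ∑ k, (g k)⁻¹ * F (e k) (e k) := by
        simp only [hvu.sum_repr_smul hB hg, map_smul, smul_eq_mul]

lemma ricci_eq_sum_basis (hvu : IsDualPair B v u)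
    (hB : ∀ i j, B (e i) (e j) = if i = j then g i else 0)
    (hg : ∀ i, g i ≠ 0) (x y : L) :
    ricci B v u x y = -(1 / 2 : ℝ) * ∑ k, (g k)⁻¹ * B ⁅x, e k⁆ ⁅y, e k⁆
      + (1 / 4 : ℝ) * ∑ k, ∑ l, (g k)⁻¹ * (g l)⁻¹ * (B ⁅e k, e l⁆ x * B ⁅e k, e l⁆ y) := by
  let ad := LieAlgebra.ad ℝ L
  let adRight (l : L) : L →ₗ[ℝ] L := (ad : L →ₗ[ℝ] Module.End ℝ L).flip l
  have first : ∑ i, B ⁅x, v i⁆ ⁅y, u i⁆ = ∑ k, (g k)⁻¹ * B ⁅x, e k⁆ ⁅y, e k⁆ := by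
    simpa [ad] using hvu.sum_apply_eq hB hg (B.compl₁₂ (ad x) (ad y))
  have inner (a b : L) : ∑ j, B ⁅a, v j⁆ x * B ⁅b, u j⁆ y
      = ∑ l, (g l)⁻¹ * (B ⁅a, e l⁆ x * B ⁅b, e l⁆ y) := by
    simpa [ad] using hvu.sum_apply_eq hB hg
      (LinearMap.BilinForm.linMulLin ((B.flip x) ∘ₗ ad a) ((B.flip y) ∘ₗ ad b))
  have outer (l : L) : ∑ i, B ⁅v i, l⁆ x * B ⁅u i, l⁆ y
      = ∑ k, (g k)⁻¹ * (B ⁅e k, l⁆ x * B ⁅e k, l⁆ y) := by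
    simpa [ad, adRight] using hvu.sum_apply_eq hB hg
      (LinearMap.BilinForm.linMulLin ((B.flip x) ∘ₗ adRight l) ((B.flip y) ∘ₗ adRight l))
  have second : ∑ i, ∑ j, B ⁅v i, v j⁆ x * B ⁅u i, u j⁆ y
      = ∑ k, ∑ l, (g k)⁻¹ * (g l)⁻¹ * (B ⁅e k, e l⁆ x * B ⁅e k, e l⁆ y) := by
    rw [Finset.sum_congr rfl fun i _ => inner (v i) (u i), Finset.sum_comm]
    simp only [← Finset.mul_sum, outer]
    simp only [Finset.mul_sum]
    rw [Finset.sum_comm]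
    exact Finset.sum_congr rfl fun k _ => Finset.sum_congr rfl fun l _ => by ring
  rw [ricci, first, second]

lemma ricci_basis_eq_zero_of_ne (he : IsNiceBasis e) (hvu : IsDualPair B v u)
    (hB : ∀ i j, B (e i) (e j) = if i = j then g i else 0) (hg : ∀ i, g i ≠ 0)
    {p q : κ} (hpq : p ≠ q) : ricci B v u (e p) (e q) = 0 := by
  have first (k : κ) : B ⁅e p, e k⁆ ⁅e q, e k⁆ = 0 := by
    rw [apply_eq_sum_repr_mul_repr hB]
    exact Finset.sum_eq_zero fun m _ => by
      rw [mul_assoc, he.repr_lie_mul_repr_lie_eq_zero hpq, mul_zero]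
  have second (k l : κ) : B ⁅e k, e l⁆ (e p) * B ⁅e k, e l⁆ (e q) = 0 := by
    rw [apply_basis_eq_mul_repr hB, apply_basis_eq_mul_repr hB, mul_mul_mul_comm,
      he.repr_mul_repr_eq_zero hpq, mul_zero]
  simp [ricci_eq_sum_basis hvu hB hg, first, second]

end OrthogonalBasis

lemma sum_sum_eq_two_nsmul_sum_sum_lt {κ M : Type} [Fintype κ] [LinearOrder κ] [AddCommMonoid M]
    (F : κ → κ → M) (hsymm : ∀ i j, F j i = F i j) (hdiag : ∀ i, F i i = 0) :
    ∑ i, ∑ j, F i j = 2 • ∑ i, ∑ j, if i < j then F i j else 0 := by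
  have split (i j : κ) : F i j = (if i < j then F i j else 0) + (if j < i then F i j else 0) := by
    rcases lt_trichotomy i j with h | rfl | h
    · simp [h, h.not_gt]
    · simp [hdiag]
    · simp [h, h.not_gt]
  have swap : ∑ i, ∑ j, (if j < i then F i j else 0) = ∑ i, ∑ j, if i < j then F i j else 0 := by
    rw [Finset.sum_comm]
    simp only [hsymm]
  calc ∑ i, ∑ j, F i j
      = ∑ i, ∑ j, (if i < j then F i j else 0) + ∑ i, ∑ j, (if j < i then F i j else 0) := by
        simp only [← Finset.sum_add_distrib, ← split]
    _ = 2 • ∑ i, ∑ j, if i < j then F i j else 0 := by rw [swap, two_nsmul]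

section LinearOrder

variable {L : Type} [LieRing L] [LieAlgebra ℝ L] {B : LinearMap.BilinForm ℝ L}
  {κ : Type} [Fintype κ] [LinearOrder κ] {e : Module.Basis κ ℝ L} {g : κ → ℝ}
  {ι : Type} [Fintype ι] {v : Module.Basis ι ℝ L} {u : ι → L}

lemma ricci_eq_sum_basis_lt (hvu : IsDualPair B v u)
    (hB : ∀ i j, B (e i) (e j) = if i = j then g i else 0)
    (hg : ∀ i, g i ≠ 0) (x y : L) :
    ricci B v u x y = -(1 / 2 : ℝ) * ∑ k, (g k)⁻¹ * B ⁅x, e k⁆ ⁅y, e k⁆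
      + (1 / 2 : ℝ) * ∑ k, ∑ l,
        if k < l then (g k)⁻¹ * (g l)⁻¹ * (B ⁅e k, e l⁆ x * B ⁅e k, e l⁆ y) else 0 := by
  rw [ricci_eq_sum_basis hvu hB hg, sum_sum_eq_two_nsmul_sum_sum_lt, two_nsmul]
  · ring
  · intro k l
    rw [← lie_skew, map_neg, LinearMap.neg_apply, LinearMap.neg_apply, neg_mul_neg]
    ring
  · simp

lemma ricci_basis_self_eq {c : κ → κ → ℝ} {d : κ → κ → κ}
    (hcd : ∀ i j, i ≠ j → ⁅e i, e j⁆ ≠ 0 → ⁅e i, e j⁆ = c i j • e (d i j))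
    (hvu : IsDualPair B v u)
    (hB : ∀ i j, B (e i) (e j) = if i = j then g i else 0) (hg : ∀ i, g i ≠ 0) (k : κ) :
    ricci B v u (e k) (e k) =
      (1 / 2 : ℝ) * (∑ i, ∑ j,
          if i < j ∧ d i j = k ∧ ⁅e i, e j⁆ ≠ 0 then c i j ^ 2 * g k ^ 2 / (g i * g j) else 0)
        - (1 / 2 : ℝ) * ∑ i, if ⁅e k, e i⁆ ≠ 0 then c k i ^ 2 * g (d k i) / g i else 0 := by
  have first (i : κ) : (g i)⁻¹ * B ⁅e k, e i⁆ ⁅e k, e i⁆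
      = if ⁅e k, e i⁆ ≠ 0 then c k i ^ 2 * g (d k i) / g i else 0 := by
    by_cases h : ⁅e k, e i⁆ = 0
    · simp [h]
    have hki : k ≠ i := by rintro rfl; exact h (lie_self _)
    rw [if_pos h, hcd k i hki h]
    simp only [map_smul, LinearMap.smul_apply, hB, if_pos, smul_eq_mul]
    field_simp
  have second (i j : κ) : (g i)⁻¹ * (g j)⁻¹ * (B ⁅e i, e j⁆ (e k) * B ⁅e i, e j⁆ (e k))
      = if d i j = k ∧ ⁅e i, e j⁆ ≠ 0 then c i j ^ 2 * g k ^ 2 / (g i * g j) else 0 := by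
    by_cases h : ⁅e i, e j⁆ = 0
    · simp [h]
    have hij : i ≠ j := by rintro rfl; exact h (lie_self _)
    by_cases hdk : d i j = k
    · rw [if_pos ⟨hdk, h⟩, hcd i j hij h]
      simp only [hdk, map_smul, LinearMap.smul_apply, hB, if_pos, smul_eq_mul]
      field_simp
    · rw [if_neg fun hd => hdk hd.1, hcd i j hij h]
      simp [hB, hdk]
  simp only [ricci_eq_sum_basis_lt hvu hB hg, first, second, ite_and]
  ring

end LinearOrder

theorem ricci_diagonal_metric_nice_general {L : Type} [LieRing L] [LieAlgebra ℝ L]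
    {n : ℕ}
    (e : Module.Basis (Fin n) ℝ L) (he : IsNiceBasis e)
    (c : Fin n → Fin n → ℝ) (d : Fin n → Fin n → Fin n)
    (hcd : ∀ i j, i ≠ j → ⁅e i, e j⁆ ≠ 0 →
      ⁅e i, e j⁆ = c i j • e (d i j) ∧ c i j ≠ 0)
    (g : Fin n → ℝ) (hg : ∀ i, g i ≠ 0)
    (B : LinearMap.BilinForm ℝ L)
    (hB : ∀ i j, B (e i) (e j) = if i = j then g i else 0) :
    ∀ (ι : Type) [Fintype ι] (v : Module.Basis ι ℝ L) (u : ι → L),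
      IsDualPair B (⇑v) u →
        (∀ k l, k ≠ l → ricci B (⇑v) u (e k) (e l) = 0) ∧
        (∀ k, ricci B (⇑v) u (e k) (e k) =
          (1 / 2 : ℝ) * (∑ i : Fin n, ∑ j : Fin n,
              if i < j ∧ d i j = k ∧ ⁅e i, e j⁆ ≠ 0 then
                c i j ^ 2 * g k ^ 2 / (g i * g j) else 0)
            - (1 / 2 : ℝ) * ∑ i : Fin n,
              if ⁅e (k : Fin n), e i⁆ ≠ 0 then
                c k i ^ 2 * g (d k i) / g i else 0) :=
  fun _ _ _ _ hvu =>
    ⟨fun _ _ hkl => ricci_basis_eq_zero_of_ne he hvu hB hg hkl,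
      ricci_basis_self_eq (fun i j hij h => (hcd i j hij h).1) hvu hB hg⟩

/-- The Ricci tensor of a diagonal metric on a nice nilpotent Lie algebra is diagonal,
with explicit diagonal entries. -/
theorem ricci_diagonal_metric_nice {L : Type} [LieRing L] [LieAlgebra ℝ L]
    [LieRing.IsNilpotent L] {n : ℕ}
    (e : Module.Basis (Fin n) ℝ L) (he : IsNiceBasis e)
    (c : Fin n → Fin n → ℝ) (d : Fin n → Fin n → Fin n)
    (hcd : ∀ i j, i ≠ j → ⁅e i, e j⁆ ≠ 0 →
      ⁅e i, e j⁆ = c i j • e (d i j) ∧ c i j ≠ 0)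
    (g : Fin n → ℝ) (hg : ∀ i, g i ≠ 0)
    (B : LinearMap.BilinForm ℝ L)
    (hB : ∀ i j, B (e i) (e j) = if i = j then g i else 0) :
    ∀ (ι : Type) [Fintype ι] (v : Module.Basis ι ℝ L) (u : ι → L),
      IsDualPair B (⇑v) u →
        (∀ k l, k ≠ l → ricci B (⇑v) u (e k) (e l) = 0) ∧
        (∀ k, ricci B (⇑v) u (e k) (e k) =
          (1 / 2 : ℝ) * (∑ i : Fin n, ∑ j : Fin n,
              if i < j ∧ d i j = k ∧ ⁅e i, e j⁆ ≠ 0 then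
                c i j ^ 2 * g k ^ 2 / (g i * g j) else 0)
            - (1 / 2 : ℝ) * ∑ i : Fin n,
              if ⁅e (k : Fin n), e i⁆ ≠ 0 then
                c k i ^ 2 * g (d k i) / g i else 0) :=
  ricci_diagonal_metric_nice_general e he c d hcd g hg B hB
end

section
/- Let 𝔤 be a real nilpotent Lie algebra with a nice basis (e_1,…,e_n); for i ≠ j with [e_i,e_j] ≠ 0 write [e_i,e_j] = c_{ij}·e_{d(i,j)} with c_{ij} ≠ 0. Let s be an involution of {1,…,n} that is a diagram involution, i.e. whenever [e_i,e_j] ≠ 0 also [e_{s(i)},e_{s(j)}] ≠ 0 and d(s(i),s(j)) = s(d(i,j)). Let (g_i) be nonzero real numbers with g_{s(i)} = g_i, and let ⟨·,·⟩ be the σ-diagonal metric determined by ⟨e_i, e_{s(i)}⟩ = g_i and ⟨e_i, e_j⟩ = 0 whenever j ≠ s(i). Then ric(e_k, e_l) = 0 whenever l ≠ s(k), and for every k, ric(e_k, e_{s(k)}) = (1/2)·Σ_{i<j, d(i,j)=k} c_{ij}·c_{s(i)s(j)} · g_k² / (g_i g_j) − (1/2)·Σ_{i: [e_k,e_i]≠0}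 c_{ki}·c_{s(k)s(i)} · g_{d(k,i)} / g_i. -/
open Classical

/-!
A sum `∑ i, F (v i) (u i)` of a bilinear form over a dual pair does not depend on the pair, so the
Ricci tensor can be computed with the pair `((g k)⁻¹ • e (s k), e k)`. Every term is then a product
of values of `B` on brackets of basis vectors, and `B` pairs `e a` only with `e (s a)`. For a
nonzero term of `ric (e k) (e l)`, the diagram involution produces two brackets with a common
factor `e i` landing on the same basis vector, so niceness forces `l = s k`. In the diagonal entry
the quadratic part is symmetric in `(i, j)` and vanishes for `i = j`, so it is twice the sum over
`i < j`.
-/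

namespace IsDualPair

variable {L : Type} [LieRing L] [LieAlgebra ℝ L] {ι κ : Type} [Fintype ι] [Fintype κ]
  {B : LinearMap.BilinForm ℝ L}

lemma apply_eq_repr_s3 {v : Module.Basis ι ℝ L} {u : ι → L} (h : IsDualPair B v u) (z : L)
    (j : ι) : B z (u j) = v.repr z j := by
  rw [IsDualPair] at h
  conv_lhs => rw [← v.sum_repr z]
  simp [-Module.Basis.sum_repr, h]

lemma repr_eq_apply {v : κ → L} {u : Module.Basis κ ℝ L} (h : IsDualPair B v u) (y : L)
    (k : κ) : u.repr y k = B (v k) y := by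
  rw [IsDualPair] at h
  conv_rhs => rw [← u.sum_repr y]
  simp [-Module.Basis.sum_repr, h]

lemma sum_eq {v : Module.Basis ι ℝ L} {u : ι → L} (h : IsDualPair B v u) {v' : κ → L}
    {u' : Module.Basis κ ℝ L} (h' : IsDualPair B v' u') (F : L →ₗ[ℝ] L →ₗ[ℝ] ℝ) :
    ∑ i, F (v i) (u i) = ∑ k, F (v' k) (u' k) := by
  have hu : ∀ i, u i = ∑ k, v.repr (v' k) i • u' k := fun i => by
    conv_lhs => rw [← u'.sum_repr (u i)]
    simp only [h'.repr_eq_apply, h.apply_eq_repr_s3]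
  calc ∑ i, F (v i) (u i) = ∑ k, F (∑ i, v.repr (v' k) i • v i) (u' k) := by
        simp only [hu, map_sum, map_smul, LinearMap.sum_apply, LinearMap.smul_apply]
        exact Finset.sum_comm
    _ = ∑ k, F (v' k) (u' k) := by simp only [v.sum_repr]

lemma ricci_eq {v : Module.Basis ι ℝ L} {u : ι → L} (h : IsDualPair B v u) {v' : κ → L}
    {u' : Module.Basis κ ℝ L} (h' : IsDualPair B v' u') (x y : L) :
    ricci B v u x y = ricci B v' u' x y := by
  have first := h.sum_eq h' (B.compl₁₂ (LieAlgebra.ad ℝ L x) (LieAlgebra.ad ℝ L y))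
  have left := fun a b => h.sum_eq h' ((LinearMap.mul ℝ ℝ).compl₁₂
    ((B.flip x).comp (LieAlgebra.ad ℝ L a)) ((B.flip y).comp (LieAlgebra.ad ℝ L b)))
  have right := fun a b => h.sum_eq h' ((LinearMap.mul ℝ ℝ).compl₁₂
    ((B.flip x).comp (-LieAlgebra.ad ℝ L a)) ((B.flip y).comp (-LieAlgebra.ad ℝ L b)))
  simp only [LinearMap.compl₁₂_apply, LieAlgebra.ad_apply, LinearMap.coe_comp,
    Function.comp_apply, LinearMap.BilinForm.flip_apply, LinearMap.mul_apply', LinearMap.neg_apply,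
    lie_skew] at first left right
  unfold ricci
  rw [first, Finset.sum_congr rfl fun i _ => left (v i) (u i), Finset.sum_comm,
    Finset.sum_congr rfl fun k _ => right (v' k) (u' k), Finset.sum_comm]

end IsDualPair

lemma Finset.sum_sum_eq_two_mul_sum_sum_lt {κ R : Type*} [Fintype κ] [LinearOrder κ]
    [NonAssocSemiring R] {f : κ → κ → R} (hf : ∀ i j, f j i = f i j) (hdiag : ∀ i, f i i = 0) :
    ∑ i, ∑ j, f i j = 2 * ∑ i, ∑ j, if i < j then f i j else 0 := by
  have split : ∀ i j, f i j = (if i < j then f i j else 0) + (if j < i then f j i else 0) := by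
    intro i j
    rcases lt_trichotomy i j with h | rfl | h
    · simp [h, h.not_gt]
    · simp [hdiag]
    · simp [h, h.not_gt, hf]
  calc ∑ i, ∑ j, f i j
      = (∑ i, ∑ j, if i < j then f i j else 0) + ∑ i, ∑ j, if j < i then f j i else 0 := by
        rw [← Finset.sum_add_distrib]
        exact Finset.sum_congr rfl fun i _ => by
          rw [← Finset.sum_add_distrib]; exact Finset.sum_congr rfl fun j _ => split i j
    _ = 2 * ∑ i, ∑ j, if i < j then f i j else 0 := by rw [Finset.sum_comm (γ := κ), two_mul]

section NiceBasis

variable {L : Type} [LieRing L] [LieAlgebra ℝ L] {κ : Type} {e : Module.Basis κ ℝ L}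
  {C : κ → κ → ℝ} {d : κ → κ → κ}

lemma lie_ne_zero_iff (hC : ∀ i j, ⁅e i, e j⁆ = C i j • e (d i j)) (i j : κ) :
    ⁅e i, e j⁆ ≠ 0 ↔ C i j ≠ 0 := by
  simp [hC, e.ne_zero]

lemma repr_lie (hC : ∀ i j, ⁅e i, e j⁆ = C i j • e (d i j)) (i j : κ) :
    e.repr ⁅e i, e j⁆ = Finsupp.single (d i j) (C i j) := by
  rw [hC, map_smul, e.repr_self, Finsupp.smul_single_one]

lemma single_index_swap (hC : ∀ i j, ⁅e i, e j⁆ = C i j • e (d i j)) (i j : κ) :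
    Finsupp.single (d j i) (C j i) = Finsupp.single (d i j) (-C i j) := by
  rw [← repr_lie hC, ← lie_skew, map_neg, repr_lie hC, Finsupp.single_neg]

lemma structConst_swap (hC : ∀ i j, ⁅e i, e j⁆ = C i j • e (d i j)) (i j : κ) :
    C j i = -C i j := by
  rcases (Finsupp.single_eq_single_iff _ _ _ _).1 (single_index_swap hC i j) with h | h
  · exact h.2
  · rw [h.1, h.2]

lemma index_swap (hC : ∀ i j, ⁅e i, e j⁆ = C i j • e (d i j)) {i j : κ} (h : C i j ≠ 0) :
    d j i = d i j := by
  rcases (Finsupp.single_eq_single_iff _ _ _ _).1 (single_index_swap hC i j) with h' | h'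
  · exact h'.1
  · exact absurd (neg_eq_zero.1 h'.2) h

lemma eq_of_index_eq (he : IsNiceBasis e) (hC : ∀ i j, ⁅e i, e j⁆ = C i j • e (d i j))
    {a b i : κ} (ha : C a i ≠ 0) (hb : C b i ≠ 0) (hab : d a i = d b i) : a = b := by
  refine he.2 i (d a i) a b ?_ ?_
  · simp [repr_lie hC, structConst_swap hC a i, index_swap hC ha, ha]
  · simp [repr_lie hC, structConst_swap hC b i, index_swap hC hb, hab, hb]

-- `c i j` is meaningful only where `⁅e i, e j⁆ ≠ 0`; elsewhere this version is `0`, so that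
-- `⁅e i, e j⁆ = structConst e c i j • e (d i j)` holds for all `i, j`.
noncomputable def structConst (e : Module.Basis κ ℝ L) (c : κ → κ → ℝ) (i j : κ) : ℝ :=
  if ⁅e i, e j⁆ ≠ 0 then c i j else 0

lemma lie_eq_structConst_smul {c : κ → κ → ℝ}
    (hcd : ∀ i j, ⁅e i, e j⁆ ≠ 0 → ⁅e i, e j⁆ = c i j • e (d i j)) (i j : κ) :
    ⁅e i, e j⁆ = structConst e c i j • e (d i j) := by
  by_cases h : ⁅e i, e j⁆ = 0
  · simp [structConst, h]
  · rw [structConst, if_pos h]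
    exact hcd i j h

end NiceBasis

section DiagramInvolution

variable {L : Type} [LieRing L] [LieAlgebra ℝ L] {κ : Type} {e : Module.Basis κ ℝ L}
  {C : κ → κ → ℝ} {d : κ → κ → κ} {s : κ → κ} {g : κ → ℝ} {B : LinearMap.BilinForm ℝ L}

structure IsDiagramInvolution (e : Module.Basis κ ℝ L) (d : κ → κ → κ) (s : κ → κ) : Prop where
  involutive : Function.Involutive s
  lie_ne_zero : ∀ i j, ⁅e i, e j⁆ ≠ 0 → ⁅e (s i), e (s j)⁆ ≠ 0
  index_eq : ∀ i j, ⁅e i, e j⁆ ≠ 0 → d (s i) (s j) = s (d i j)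

lemma IsDiagramInvolution.structConst_ne_zero (hs : IsDiagramInvolution e d s)
    (hC : ∀ i j, ⁅e i, e j⁆ = C i j • e (d i j)) {i j : κ} (h : C i j ≠ 0) :
    C (s i) (s j) ≠ 0 := by
  rw [← lie_ne_zero_iff hC] at h ⊢
  exact hs.lie_ne_zero i j h

lemma IsDiagramInvolution.index_eq_of_structConst_ne_zero (hs : IsDiagramInvolution e d s)
    (hC : ∀ i j, ⁅e i, e j⁆ = C i j • e (d i j)) {i j : κ} (h : C i j ≠ 0) :
    d (s i) (s j) = s (d i j) :=
  hs.index_eq i j ((lie_ne_zero_iff hC i j).2 h)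

lemma IsDiagramInvolution.structConst_mul_structConst (hs : IsDiagramInvolution e d s)
    (c : κ → κ → ℝ) (i j : κ) :
    structConst e c i j * structConst e c (s i) (s j) =
      if ⁅e i, e j⁆ ≠ 0 then c i j * c (s i) (s j) else 0 := by
  by_cases h : ⁅e i, e j⁆ = 0
  · simp [structConst, h]
  · simp [structConst, h, hs.lie_ne_zero i j h]

lemma apply_lie_lie [DecidableEq κ] (hC : ∀ i j, ⁅e i, e j⁆ = C i j • e (d i j))
    (hB : ∀ i j, B (e i) (e j) = if j = s i then g i else 0) (a i b j : κ) :
    B ⁅e a, e i⁆ ⁅e b, e j⁆ = C a i * C b j * if d b j = s (d a i) then g (d a i) else 0 := by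
  simp only [hC, map_smul, LinearMap.smul_apply, smul_eq_mul, hB]
  ring

lemma apply_lie_basis [DecidableEq κ] (hC : ∀ i j, ⁅e i, e j⁆ = C i j • e (d i j))
    (hB : ∀ i j, B (e i) (e j) = if j = s i then g i else 0) (i j a : κ) :
    B ⁅e i, e j⁆ (e a) = C i j * if a = s (d i j) then g (d i j) else 0 := by
  simp only [hC, map_smul, LinearMap.smul_apply, smul_eq_mul, hB]

lemma apply_lie_lie_involution [DecidableEq κ] (he : IsNiceBasis e)
    (hC : ∀ i j, ⁅e i, e j⁆ = C i j • e (d i j)) (hs : IsDiagramInvolution e d s)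
    (hB : ∀ i j, B (e i) (e j) = if j = s i then g i else 0) (k l i : κ) :
    B ⁅e k, e i⁆ ⁅e l, e (s i)⁆ = if l = s k then C k i * C (s k) (s i) * g (d k i) else 0 := by
  rw [apply_lie_lie hC hB]
  by_cases hki : C k i = 0
  · simp [hki]
  by_cases hl : l = s k
  · subst hl
    simp [hs.index_eq_of_structConst_ne_zero hC hki]
  by_cases hli : C l (s i) = 0
  · simp [hli, hl]
  -- otherwise `⁅e (s l), e i⁆` and `⁅e k, e i⁆` would both have a nonzero `e (d k i)`-component
  have hmatch : d l (s i) ≠ s (d k i) := fun hd => hl <| by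
    have hsl := hs.structConst_ne_zero hC hli
    have hdl := hs.index_eq_of_structConst_ne_zero hC hli
    rw [hs.involutive i] at hsl hdl
    rw [eq_of_index_eq he hC hki hsl (by rw [hdl, hd, hs.involutive]), hs.involutive]
  simp [hl, hmatch]

lemma apply_lie_mul_apply_lie_involution [DecidableEq κ]
    (hC : ∀ i j, ⁅e i, e j⁆ = C i j • e (d i j)) (hs : IsDiagramInvolution e d s)
    (hB : ∀ i j, B (e i) (e j) = if j = s i then g i else 0) (hgs : ∀ i, g (s i) = g i)
    (k l p q : κ) :
    B ⁅e (s p), e (s q)⁆ (e k) * B ⁅e p, e q⁆ (e l) =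
      if l = s k ∧ d p q = k then C p q * C (s p) (s q) * g k ^ 2 else 0 := by
  rw [apply_lie_basis hC hB, apply_lie_basis hC hB]
  by_cases hpq : C p q = 0
  · simp [hpq]
  rw [hs.index_eq_of_structConst_ne_zero hC hpq, hs.involutive, hgs]
  by_cases hk : d p q = k
  · subst hk
    simp only [if_true, and_true]
    split_ifs <;> ring
  · have hk' : k ≠ d p q := Ne.symm hk
    simp [hk, hk']

lemma isDualPair_of_sigmaDiagonal [Fintype κ] [DecidableEq κ]
    (hB : ∀ i j, B (e i) (e j) = if j = s i then g i else 0) (hs : Function.Involutive s)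
    (hg : ∀ i, g i ≠ 0) (hgs : ∀ i, g (s i) = g i) :
    IsDualPair B (fun k => (g k)⁻¹ • e (s k)) e := by
  intro i j
  simp only [map_smul, LinearMap.smul_apply, smul_eq_mul, hB, hs i, hgs, eq_comm (a := j)]
  split_ifs <;> simp [hg]

lemma ricci_sigmaDiagonal_eq [Fintype κ] (x y : L) :
    ricci B (fun k => (g k)⁻¹ • e (s k)) e x y =
      -(1 / 2) * ∑ p, (g p)⁻¹ * B ⁅x, e (s p)⁆ ⁅y, e p⁆ + (1 / 4) * ∑ p, ∑ q,
        (g p)⁻¹ * (g q)⁻¹ * (B ⁅e (s p), e (s q)⁆ x * B ⁅e p, e q⁆ y) := by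
  simp only [ricci, lie_smul, smul_lie, map_smul, LinearMap.smul_apply, smul_eq_mul]
  congr 2
  exact Finset.sum_congr rfl fun p _ => Finset.sum_congr rfl fun q _ => by ring

lemma sum_sum_structConst_eq_two_mul_sum_sum_lt [Fintype κ] [LinearOrder κ]
    (hC : ∀ i j, ⁅e i, e j⁆ = C i j • e (d i j)) (k : κ) :
    ∑ p, ∑ q, (g p)⁻¹ * (g q)⁻¹ * (if d p q = k then C p q * C (s p) (s q) * g k ^ 2 else 0) =
      2 * ∑ p, ∑ q, if p < q ∧ d p q = k then
        C p q * C (s p) (s q) * g k ^ 2 / (g p * g q) else 0 := by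
  rw [Finset.sum_sum_eq_two_mul_sum_sum_lt (fun p q => ?symm) (fun p => ?diag)]
  · simp only [ite_and]
    congr 1
    refine Finset.sum_congr rfl fun p _ => Finset.sum_congr rfl fun q _ => ?_
    split_ifs <;> ring
  case symm =>
    by_cases hpq : C p q = 0
    · simp [hpq, structConst_swap hC p q]
    · simp only [index_swap hC hpq, structConst_swap hC p q, structConst_swap hC (s p) (s q)]
      ring_nf
  case diag =>
    simp [show C p p = 0 by linarith [structConst_swap hC p p]]

end DiagramInvolution

lemma ricci_sigmaDiagonal_basis_eq {L : Type} [LieRing L] [LieAlgebra ℝ L] {κ : Type}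
    [Fintype κ] [LinearOrder κ] {e : Module.Basis κ ℝ L} {C : κ → κ → ℝ} {d : κ → κ → κ}
    {s : κ → κ} {g : κ → ℝ} {B : LinearMap.BilinForm ℝ L} (he : IsNiceBasis e)
    (hC : ∀ i j, ⁅e i, e j⁆ = C i j • e (d i j)) (hs : IsDiagramInvolution e d s)
    (hB : ∀ i j, B (e i) (e j) = if j = s i then g i else 0) (hgs : ∀ i, g (s i) = g i)
    (k l : κ) :
    ricci B (fun k => (g k)⁻¹ • e (s k)) e (e k) (e l) =
      if l = s k then
        (1 / 2) * (∑ i, ∑ j, if i < j ∧ d i j = k then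
            C i j * C (s i) (s j) * g k ^ 2 / (g i * g j) else 0)
          - (1 / 2) * ∑ i, C k i * C (s k) (s i) * g (d k i) / g i
      else 0 := by
  have reindex : ∑ p, (g p)⁻¹ * B ⁅e k, e (s p)⁆ ⁅e l, e p⁆
      = ∑ i, (g i)⁻¹ * B ⁅e k, e i⁆ ⁅e l, e (s i)⁆ := by
    refine Fintype.sum_equiv hs.involutive.toPerm _ _ fun p => ?_
    simp [hs.involutive p, hgs]
  rw [ricci_sigmaDiagonal_eq, reindex]
  simp only [apply_lie_lie_involution he hC hs hB,
    apply_lie_mul_apply_lie_involution hC hs hB hgs]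
  split_ifs with hl
  · subst hl
    simp only [true_and]
    rw [sum_sum_structConst_eq_two_mul_sum_sum_lt hC]
    simp only [inv_mul_eq_div]
    ring
  · simp [hl]

theorem ricci_sigma_diagonal_metric_nice_general {L : Type} [LieRing L] [LieAlgebra ℝ L]
    {n : ℕ}
    (e : Module.Basis (Fin n) ℝ L) (he : IsNiceBasis e)
    (c : Fin n → Fin n → ℝ) (d : Fin n → Fin n → Fin n)
    (hcd : ∀ i j, i ≠ j → ⁅e i, e j⁆ ≠ 0 →
      ⁅e i, e j⁆ = c i j • e (d i j) ∧ c i j ≠ 0)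
    (s : Fin n → Fin n) (hs : Function.Involutive s)
    (hdi : ∀ i j, i ≠ j → ⁅e i, e j⁆ ≠ 0 →
      ⁅e (s i), e (s j)⁆ ≠ 0 ∧ d (s i) (s j) = s (d i j))
    (g : Fin n → ℝ) (hg : ∀ i, g i ≠ 0) (hgs : ∀ i, g (s i) = g i)
    (B : LinearMap.BilinForm ℝ L)
    (hB : ∀ i j, B (e i) (e j) = if j = s i then g i else 0) :
    ∀ (ι : Type) [Fintype ι] (v : Module.Basis ι ℝ L) (u : ι → L),
      IsDualPair B (⇑v) u →
        (∀ k l, l ≠ s k → ricci B (⇑v) u (e k) (e l) = 0) ∧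
        (∀ k, ricci B (⇑v) u (e k) (e (s k)) =
          (1 / 2 : ℝ) * (∑ i : Fin n, ∑ j : Fin n,
              if i < j ∧ d i j = k ∧ ⁅e i, e j⁆ ≠ 0 then
                c i j * c (s i) (s j) * g k ^ 2 / (g i * g j) else 0)
            - (1 / 2 : ℝ) * ∑ i : Fin n,
              if ⁅e (k : Fin n), e i⁆ ≠ 0 then
                c k i * c (s k) (s i) * g (d k i) / g i else 0) := by
  intro ι _ v u hvu
  have hne : ∀ i j, ⁅e i, e j⁆ ≠ 0 → i ≠ j := fun i j h hij => h (hij ▸ lie_self (e i))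
  have hC := lie_eq_structConst_smul fun i j h => (hcd i j (hne i j h) h).1
  have hsd : IsDiagramInvolution e d s :=
    ⟨hs, fun i j h => (hdi i j (hne i j h) h).1, fun i j h => (hdi i j (hne i j h) h).2⟩
  have hdual := isDualPair_of_sigmaDiagonal hB hs hg hgs
  refine ⟨fun k l hl => ?_, fun k => ?_⟩ <;>
    rw [hvu.ricci_eq hdual, ricci_sigmaDiagonal_basis_eq he hC hsd hB hgs]
  · rw [if_neg hl]
  · rw [if_pos rfl]
    simp only [hsd.structConst_mul_structConst, ite_mul, zero_mul, ite_div, zero_div, ite_and]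

/-- The Ricci tensor of a σ-diagonal metric on a nice nilpotent Lie algebra, for a
diagram involution `s`, is again σ-diagonal, with explicit entries. -/
theorem ricci_sigma_diagonal_metric_nice {L : Type} [LieRing L] [LieAlgebra ℝ L]
    [LieRing.IsNilpotent L] {n : ℕ}
    (e : Module.Basis (Fin n) ℝ L) (he : IsNiceBasis e)
    (c : Fin n → Fin n → ℝ) (d : Fin n → Fin n → Fin n)
    (hcd : ∀ i j, i ≠ j → ⁅e i, e j⁆ ≠ 0 →
      ⁅e i, e j⁆ = c i j • e (d i j) ∧ c i j ≠ 0)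
    (s : Fin n → Fin n) (hs : Function.Involutive s)
    (hdi : ∀ i j, i ≠ j → ⁅e i, e j⁆ ≠ 0 →
      ⁅e (s i), e (s j)⁆ ≠ 0 ∧ d (s i) (s j) = s (d i j))
    (g : Fin n → ℝ) (hg : ∀ i, g i ≠ 0) (hgs : ∀ i, g (s i) = g i)
    (B : LinearMap.BilinForm ℝ L)
    (hB : ∀ i j, B (e i) (e j) = if j = s i then g i else 0) :
    ∀ (ι : Type) [Fintype ι] (v : Module.Basis ι ℝ L) (u : ι → L),
      IsDualPair B (⇑v) u →
        (∀ k l, l ≠ s k → ricci B (⇑v) u (e k) (e l) = 0) ∧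
        (∀ k, ricci B (⇑v) u (e k) (e (s k)) =
          (1 / 2 : ℝ) * (∑ i : Fin n, ∑ j : Fin n,
              if i < j ∧ d i j = k ∧ ⁅e i, e j⁆ ≠ 0 then
                c i j * c (s i) (s j) * g k ^ 2 / (g i * g j) else 0)
            - (1 / 2 : ℝ) * ∑ i : Fin n,
              if ⁅e (k : Fin n), e i⁆ ≠ 0 then
                c k i * c (s k) (s i) * g (d k i) / g i else 0) :=
  ricci_sigma_diagonal_metric_nice_general e he c d hcd s hs hdi g hg hgs B hB
end

section
/- Let M be an m×n integer matrix whose reduction modulo 2 defines a surjective linear map (ℤ/2ℤ)^n → (ℤ/2ℤ)^m, let c ∈ ℝ^m have all entries nonzero, and let k ∈ ℝ. If there exists X ∈ ℝ^m with all entries nonzero such that Mᵀ X = (k, …, k), then there exists g ∈ ℝ^n with all entries nonzero such that the vector Y ∈ ℝ^m with entries Y_a = c_a² · ∏_{j=1}^n g_j^{M_{aj}} satisfies Mᵀ Y = (k, …, k). -/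
/-!
Writing a nonzero real as `(-1)^s · exp t` identifies `ℝˣ` with the additive group
`ZMod 2 × ℝ`, and under this identification `g ↦ e^M(g)` becomes the linear map `v ↦ M v`.
That map is onto `ZMod 2`-vectors by hypothesis, and onto `ℝ`-vectors because the columns
forming a mod-2 basis give a square minor of odd, hence nonzero, determinant. So `e^M` is onto
vectors with nonzero entries, and any `g` with `e^M(g)_a = X_a / c_a²` works.
-/

open Matrix Function

lemma AddChar.map_sum_eq_prod {ι A M : Type*} [AddCommMonoid A] [CommMonoid M] (ψ : AddChar A M)
    (s : Finset ι) (f : ι → A) : ψ (∑ i ∈ s, f i) = ∏ i ∈ s, ψ (f i) :=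
  map_prod ψ.toMonoidHom (fun i => Multiplicative.ofAdd (f i)) s

lemma AddChar.prod_zpow_eq_apply_mulVec {m ι A G : Type*} [Fintype ι] [Ring A]
    [DivisionCommMonoid G] (ψ : AddChar A G) (M : Matrix m ι ℤ) (v : ι → A) (a : m) :
    ∏ j, ψ (v j) ^ M a j = ψ ((M.map (Int.cast : ℤ → A) *ᵥ v) a) := by
  simp only [mulVec, dotProduct, map_apply, ← zsmul_eq_mul, ψ.map_sum_eq_prod,
    ψ.map_zsmul_eq_zpow]

namespace Matrix

variable {m ι : Type*} [Fintype ι]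

theorem exists_isUnit_submatrix_of_mulVec_surjective [Fintype m] [DecidableEq m] {K : Type*}
    [Field K] {A : Matrix m ι K} (hA : Surjective A.mulVec) :
    ∃ σ : m → ι, IsUnit (A.submatrix id σ) := by
  have hspan : Submodule.span K (Set.range A.col) = ⊤ := by
    rw [← range_mulVecLin, LinearMap.range_eq_top]
    exact hA
  obtain ⟨κ, a, -, hspan_a, hli⟩ := exists_linearIndependent' K A.col
  let b := Module.Basis.mk hli (hspan_a.trans hspan).ge
  let e : m ≃ κ := (Pi.basisFun K m).indexEquiv b
  exact ⟨a ∘ e, linearIndependent_cols_iff_isUnit.mp (hli.comp e e.injective)⟩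

theorem mulVec_surjective_of_submatrix {l R : Type*} [Fintype l] [DecidableEq ι] [Semiring R]
    {A : Matrix m ι R} (σ : l → ι) (hA : Surjective (A.submatrix id σ).mulVec) :
    Surjective A.mulVec := by
  intro y
  obtain ⟨v, rfl⟩ := hA y
  refine ⟨(1 : Matrix ι ι R).submatrix id σ *ᵥ v, ?_⟩
  rw [mulVec_mulVec]
  simpa using congrArg (· *ᵥ v) (mul_submatrix_one (Equiv.refl ι) σ A)

theorem mulVec_surjective_map_of_injective [Fintype m] [DecidableEq m] {R K L : Type*}
    [CommRing R] [Field K] [Field L] (A : Matrix m ι R) (f : R →+* K) (φ : R →+* L)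
    (hf : Surjective (A.map f).mulVec) (hφ : Injective φ) : Surjective (A.map φ).mulVec := by
  classical
  obtain ⟨σ, hσ⟩ := exists_isUnit_submatrix_of_mulVec_surjective hf
  have hf_det : f (A.submatrix id σ).det = ((A.map f).submatrix id σ).det := f.map_det _
  have hφ_det : φ (A.submatrix id σ).det = ((A.map φ).submatrix id σ).det := φ.map_det _
  have hdet : (A.submatrix id σ).det ≠ 0 := by
    intro h
    rw [isUnit_iff_isUnit_det, ← hf_det, h, map_zero] at hσ
    exact not_isUnit_zero hσ
  refine mulVec_surjective_of_submatrix σ (mulVec_surjective_iff_isUnit.mpr ?_)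
  rw [isUnit_iff_isUnit_det, ← hφ_det, isUnit_iff_ne_zero]
  exact (map_ne_zero_iff φ hφ).mpr hdet

theorem mulVec_surjective_of_map_fst_of_map_snd {R S : Type*} [Semiring R] [Semiring S]
    (A : Matrix m ι (R × S)) (hR : Surjective (A.map Prod.fst).mulVec)
    (hS : Surjective (A.map Prod.snd).mulVec) : Surjective A.mulVec := by
  intro y
  obtain ⟨s, hs⟩ := hR (Prod.fst ∘ y)
  obtain ⟨t, ht⟩ := hS (Prod.snd ∘ y)
  refine ⟨fun j => (s j, t j), funext fun a => Prod.ext ?_ ?_⟩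
  · simpa [mulVec, dotProduct, Prod.fst_sum] using congrFun hs a
  · simpa [mulVec, dotProduct, Prod.snd_sum] using congrFun ht a

end Matrix

noncomputable def signExpChar : AddChar (ZMod 2 × ℝ) ℝ where
  toFun p := AddChar.zmodChar 2 (by norm_num : (-1 : ℝ) ^ 2 = 1) p.1 * Real.exp p.2
  map_zero_eq_one' := by simp
  map_add_eq_mul' p q := by
    simp only [Prod.fst_add, Prod.snd_add, AddChar.map_add_eq_mul, Real.exp_add]
    ring

lemma signExpChar_apply (p : ZMod 2 × ℝ) : signExpChar p = (-1) ^ p.1.val * Real.exp p.2 := rfl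

lemma range_signExpChar : Set.range signExpChar = {0}ᶜ := by
  ext y
  refine ⟨?_, fun hy => ?_⟩
  · rintro ⟨p, rfl⟩
    simp [signExpChar_apply, Real.exp_ne_zero]
  · rw [Set.mem_compl_singleton_iff] at hy
    refine ⟨(if y < 0 then 1 else 0, Real.log y), ?_⟩
    rw [signExpChar_apply, Real.exp_log_eq_abs hy]
    split_ifs with h
    · simp [abs_of_neg h, show (1 : ZMod 2).val = 1 from rfl]
    · simp [abs_of_nonneg (not_lt.mp h)]

theorem exists_prod_zpow_eq {m ι : Type*} [Fintype m] [DecidableEq m] [Fintype ι]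
    (M : Matrix m ι ℤ) (hM : Surjective (M.map (Int.cast : ℤ → ZMod 2)).mulVec) (y : m → ℝ)
    (hy : ∀ a, y a ≠ 0) : ∃ g : ι → ℝ, (∀ j, g j ≠ 0) ∧ ∀ a, ∏ j, g j ^ M a j = y a := by
  have hℝ : Surjective (M.map (Int.cast : ℤ → ℝ)).mulVec :=
    M.mulVec_surjective_map_of_injective (Int.castRingHom (ZMod 2)) (Int.castRingHom ℝ) hM
      Int.cast_injective
  have hprod : Surjective (M.map (Int.cast : ℤ → ZMod 2 × ℝ)).mulVec :=
    mulVec_surjective_of_map_fst_of_map_snd _ (by simpa [Matrix.map_map, Function.comp_def] using hM)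
      (by simpa [Matrix.map_map, Function.comp_def] using hℝ)
  have hy_range : ∀ a, y a ∈ Set.range signExpChar := fun a => range_signExpChar ▸ hy a
  choose p hp using hy_range
  obtain ⟨v, hv⟩ := hprod p
  refine ⟨fun j => signExpChar (v j), fun j => ?_, fun a => ?_⟩
  · exact range_signExpChar.subset ⟨v j, rfl⟩
  · rw [signExpChar.prod_zpow_eq_apply_mulVec, hv, hp]

/-- If the mod-2 reduction of the root matrix `M` is surjective and the linear system
`Mᵀ X = (k,…,k)` has a solution with all entries nonzero, then there exists a diagonal
metric `g` whose associated vector `Y_a = c_a² ∏_j g_j^{M_{aj}}` solves `Mᵀ Y = (k,…,k)`;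
i.e. there is a diagonal Einstein metric with cosmological constant `k/2`. -/
theorem sufficient_condition_diagonal_einstein (m n : ℕ) (M : Matrix (Fin m) (Fin n) ℤ)
    (hsurj : Function.Surjective
      (fun v : Fin n → ZMod 2 => fun a : Fin m => ∑ j, (M a j : ZMod 2) * v j))
    (c : Fin m → ℝ) (hc : ∀ a, c a ≠ 0) (k : ℝ)
    (hX : ∃ X : Fin m → ℝ, (∀ a, X a ≠ 0) ∧ ∀ j, ∑ a, (M a j : ℝ) * X a = k) :
    ∃ g : Fin n → ℝ, (∀ j, g j ≠ 0) ∧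
      ∀ j', ∑ a, (M a j' : ℝ) * (c a ^ 2 * ∏ j, g j ^ M a j) = k := by
  obtain ⟨X, hX_ne, hXk⟩ := hX
  have hc2 : ∀ a, c a ^ 2 ≠ 0 := fun a => pow_ne_zero 2 (hc a)
  obtain ⟨g, hg_ne, hg⟩ :=
    exists_prod_zpow_eq M hsurj (fun a => X a / c a ^ 2) fun a => div_ne_zero (hX_ne a) (hc2 a)
  refine ⟨g, hg_ne, fun j' => ?_⟩
  simpa only [hg, mul_div_cancel₀ _ (hc2 _)] using hXk j'
end

section
/- Let 𝔤 be a finite-dimensional real nilpotent Lie algebra and let B and B′ be nice bases of 𝔤 that are not equivalent. Let v = (0,1) ∈ 𝔤 × ℝ, where 𝔤 × ℝ is the product Lie algebra (with ℝ abelian). Then (B × {0}) ∪ {v} and (B′ × {0}) ∪ {v} are nice bases of 𝔤 × ℝ, and they are not equivalent. -/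
/-!
Niceness of the extended bases is inherited directly, since `(0, 1)` is central and the
brackets of the other vectors are those of `B` in the first factor.

For inequivalence, let `φ` be an automorphism of `L × ℝ` sending each `E m` to a nonzero
multiple of `E' (σ m)`. The first component `w` of `φ (0, 1)` is central in `L`, so
`ψ x := π (φ (x, 0))` with `π (x, t) := x + t • w` is a Lie endomorphism of `L`. If `σ` fixes the
last index then `w = 0`; otherwise `φ (0, 1)` is a multiple of some `(B' j, 0)` and `ψ` sends the
vector `B i` with `σ i = last` to a multiple of `B' j`. Either way `ψ` sends the vectors of `B` to
nonzero multiples of distinct vectors of `B'`, so it is an automorphism witnessing that `B` and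
`B'` are equivalent.
-/

attribute [local instance 100] LieRing.ofAssociativeRing

/-- The product Lie ring structure on `L × M`, with componentwise bracket. -/
instance prodLieRing {L M : Type} [LieRing L] [LieRing M] : LieRing (L × M) :=
  { (inferInstance : AddCommGroup (L × M)) with
    bracket := fun p q => (⁅p.1, q.1⁆, ⁅p.2, q.2⁆)
    add_lie := fun x y z => Prod.ext (add_lie x.1 y.1 z.1) (add_lie x.2 y.2 z.2)
    lie_add := fun x y z => Prod.ext (lie_add x.1 y.1 z.1) (lie_add x.2 y.2 z.2)
    lie_self := fun x => Prod.ext (lie_self x.1) (lie_self x.2)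
    leibniz_lie := fun x y z =>
      Prod.ext (leibniz_lie x.1 y.1 z.1) (leibniz_lie x.2 y.2 z.2) }

/-- The product Lie algebra structure on `L × M`. -/
instance prodLieAlgebra {L M : Type} [LieRing L] [LieRing M]
    [LieAlgebra ℝ L] [LieAlgebra ℝ M] : LieAlgebra ℝ (L × M) :=
  { (inferInstance : Module ℝ (L × M)) with
    lie_smul := fun t x y => Prod.ext (lie_smul t x.1 y.1) (lie_smul t x.2 y.2) }

/-- Two bases of a Lie algebra are equivalent if some Lie algebra automorphism maps each
element of the first to a nonzero multiple of an element of the second. -/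
def BasesEquivalent {L : Type} [LieRing L] [LieAlgebra ℝ L] {ι ι' : Type}
    (B : Module.Basis ι ℝ L) (B' : Module.Basis ι' ℝ L) : Prop :=
  ∃ φ : L ≃ₗ⁅ℝ⁆ L, ∀ i, ∃ (j : ι') (a : ℝ), a ≠ 0 ∧ φ (B i) = a • B' j

section ProdReal

variable {L : Type} [LieRing L]

@[simp]
lemma real_lie (a b : ℝ) : ⁅a, b⁆ = 0 := by
  rw [Ring.lie_def, mul_comm, sub_self]

lemma prod_real_lie (p q : L × ℝ) : ⁅p, q⁆ = (⁅p.1, q.1⁆, 0) :=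
  Prod.ext rfl (real_lie p.2 q.2)

lemma lie_zero_one (p : L × ℝ) : ⁅p, ((0 : L), (1 : ℝ))⁆ = 0 := by
  simp

variable [LieAlgebra ℝ L]

def lieInl : L →ₗ⁅ℝ⁆ L × ℝ :=
  { LinearMap.inl ℝ L ℝ with
    map_lie' := fun {x y} => by simp }

def fstAddSndSMul (w : L) (hw : ∀ z : L, ⁅z, w⁆ = 0) : L × ℝ →ₗ⁅ℝ⁆ L :=
  { LinearMap.fst ℝ L ℝ + (LinearMap.snd ℝ L ℝ).smulRight w with
    map_lie' := fun {p q} => by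
      have hw' : ∀ z : L, ⁅w, z⁆ = 0 := fun z => by rw [← lie_skew, hw, neg_zero]
      simp [lie_smul, smul_lie, hw, hw'] }

@[simp]
lemma fstAddSndSMul_apply (w : L) (hw : ∀ z : L, ⁅z, w⁆ = 0) (p : L × ℝ) :
    fstAddSndSMul w hw p = p.1 + p.2 • w :=
  rfl

lemma lie_fst_map_zero_one (φ : (L × ℝ) ≃ₗ⁅ℝ⁆ (L × ℝ)) (z : L) :
    ⁅z, (φ ((0 : L), (1 : ℝ))).1⁆ = 0 := by
  have h : ⁅((z, 0) : L × ℝ), φ ((0 : L), (1 : ℝ))⁆ = 0 := by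
    rw [← φ.apply_symm_apply (z, 0), ← LieEquiv.map_lie, lie_zero_one, map_zero]
  simpa [prod_real_lie] using congrArg Prod.fst h

end ProdReal

lemma Fin.exists_injective_of_injective_succ {n : ℕ} {σ : Fin (n + 1) → Fin (n + 1)}
    (hσ : Function.Injective σ) :
    ∃ τ : Fin n → Fin n, Function.Injective τ ∧ ∀ i : Fin n, σ i.castSucc = (τ i).castSucc ∨
      (σ i.castSucc = Fin.last n ∧ σ (Fin.last n) = (τ i).castSucc) := by
  set s := Equiv.swap (σ (Fin.last n)) (Fin.last n)
  have hs : ∀ i : Fin n, s (σ i.castSucc) ≠ Fin.last n := fun i h => by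
    rw [Equiv.swap_apply_eq_iff, Equiv.swap_apply_right] at h
    exact (Fin.castSucc_lt_last i).ne (hσ h)
  refine ⟨fun i => (s (σ i.castSucc)).castPred (hs i), fun i j h => ?_, fun i => ?_⟩
  · simpa using hσ (s.injective (Fin.castPred_inj.mp h))
  · simp only [Fin.castSucc_castPred]
    by_cases hlast : σ i.castSucc = Fin.last n
    · exact .inr ⟨hlast, by rw [hlast, Equiv.swap_apply_right]⟩
    · refine .inl (Equiv.swap_apply_of_ne_of_ne (fun h => ?_) hlast).symm
      exact (Fin.castSucc_lt_last i).ne (hσ h)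

lemma Function.Injective.of_map_basis_eq_smul {K M M' ι ι' : Type*} [Field K]
    [AddCommGroup M] [Module K M] [AddCommGroup M'] [Module K M']
    {b : Module.Basis ι K M} {b' : Module.Basis ι' K M'} {f : M →ₗ[K] M'}
    (hf : Function.Injective f) {σ : ι → ι'} {a : ι → K} (ha : ∀ i, a i ≠ 0)
    (h : ∀ i, f (b i) = a i • b' (σ i)) : Function.Injective σ := by
  have hind : LinearIndependent K fun i => (a i)⁻¹ • f (b i) :=
    (b.linearIndependent.map' f (LinearMap.ker_eq_bot.mpr hf)).units_smul
      fun i => Units.mk0 (a i)⁻¹ (inv_ne_zero (ha i))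
  have : (fun i => (a i)⁻¹ • f (b i)) = b' ∘ σ := by
    ext1 i
    rw [h, smul_smul, inv_mul_cancel₀ (ha i), one_smul, Function.comp_apply]
  rw [this] at hind
  exact hind.injective.of_comp

lemma basesEquivalent_of_lieHom {L ι : Type} [LieRing L] [LieAlgebra ℝ L] [Finite ι]
    {B B' : Module.Basis ι ℝ L} (ψ : L →ₗ⁅ℝ⁆ L) {τ : ι → ι} (hτ : Function.Injective τ)
    (hψ : ∀ i, ∃ b : ℝ, b ≠ 0 ∧ ψ (B i) = b • B' (τ i)) : BasesEquivalent B B' := by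
  choose b hb hψ using hψ
  have hsurj : Function.Surjective (ψ : L →ₗ[ℝ] L) := by
    rw [← LinearMap.range_eq_top, eq_top_iff, ← B'.span_eq, Submodule.span_le]
    rintro _ ⟨j, rfl⟩
    obtain ⟨i, rfl⟩ := Finite.surjective_of_injective hτ j
    exact ⟨(b i)⁻¹ • B i, by simp [hψ, smul_smul, hb]⟩
  have : FiniteDimensional ℝ L := B.finiteDimensional_of_finite
  exact ⟨.ofBijective ψ ⟨LinearMap.injective_iff_surjective.mpr hsurj, hsurj⟩,
    fun i => ⟨τ i, b i, hb i, hψ i⟩⟩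

section Extension

variable {L : Type} [LieRing L] [LieAlgebra ℝ L] {n : ℕ} {B : Module.Basis (Fin n) ℝ L}
  {E : Module.Basis (Fin (n + 1)) ℝ (L × ℝ)}

lemma repr_inl_castSucc (hE : ∀ i, E i.castSucc = (B i, 0)) (x : L) (i : Fin n) :
    E.repr (x, 0) i.castSucc = B.repr x i := by
  have : (E.coord i.castSucc).comp (LinearMap.inl ℝ L ℝ) = B.coord i :=
    B.ext fun j => by simp [← hE, Finsupp.single_apply, eq_comm]
  exact LinearMap.congr_fun this x

lemma repr_inl_last (hE : ∀ i, E i.castSucc = (B i, 0)) (x : L) :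
    E.repr (x, 0) (Fin.last n) = 0 := by
  have : (E.coord (Fin.last n)).comp (LinearMap.inl ℝ L ℝ) = 0 :=
    B.ext fun j => by simp [← hE, (Fin.castSucc_lt_last j).ne]
  exact LinearMap.congr_fun this x

lemma lie_castSucc (hE : ∀ i, E i.castSucc = (B i, 0)) (i j : Fin n) :
    ⁅E i.castSucc, E j.castSucc⁆ = (⁅B i, B j⁆, 0) := by
  rw [hE, hE, prod_real_lie]

lemma lie_last (hlast : E (Fin.last n) = (0, 1)) (m : Fin (n + 1)) :
    ⁅E m, E (Fin.last n)⁆ = 0 := by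
  rw [hlast, lie_zero_one]

lemma last_lie (hlast : E (Fin.last n) = (0, 1)) (m : Fin (n + 1)) :
    ⁅E (Fin.last n), E m⁆ = 0 := by
  rw [← lie_skew, lie_last hlast, neg_zero]

theorem isNiceBasis_extend (hB : IsNiceBasis B) (hE : ∀ i, E i.castSucc = (B i, 0))
    (hlast : E (Fin.last n) = (0, 1)) : IsNiceBasis E := by
  constructor
  · intro m m'
    cases m using Fin.lastCases with
    | last => exact ⟨m', 0, by rw [last_lie hlast, zero_smul]⟩
    | cast i =>
      cases m' using Fin.lastCases with
      | last => exact ⟨Fin.last n, 0, by rw [lie_last hlast, zero_smul]⟩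
      | cast j =>
        obtain ⟨k, a, hk⟩ := hB.1 i j
        exact ⟨k.castSucc, a, by rw [lie_castSucc hE, hk, hE, Prod.smul_mk, smul_zero]⟩
  · intro m k j j' h h'
    cases m using Fin.lastCases with
    | last => simp [last_lie hlast] at h
    | cast i =>
      cases j using Fin.lastCases with
      | last => simp [lie_last hlast] at h
      | cast j =>
        cases j' using Fin.lastCases with
        | last => simp [lie_last hlast] at h'
        | cast j' =>
          cases k using Fin.lastCases with
          | last => simp [lie_castSucc hE, repr_inl_last hE] at h
          | cast k =>
            rw [lie_castSucc hE, repr_inl_castSucc hE] at h h'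
            rw [hB.2 i k j j' h h']

end Extension

theorem BasesEquivalent.of_extend {L : Type} [LieRing L] [LieAlgebra ℝ L] {n : ℕ}
    {B B' : Module.Basis (Fin n) ℝ L} {E E' : Module.Basis (Fin (n + 1)) ℝ (L × ℝ)}
    (hE : ∀ i, E i.castSucc = (B i, 0)) (hlast : E (Fin.last n) = (0, 1))
    (hE' : ∀ i, E' i.castSucc = (B' i, 0)) (hlast' : E' (Fin.last n) = (0, 1))
    (h : BasesEquivalent E E') : BasesEquivalent B B' := by
  obtain ⟨φ, hφ⟩ := h
  choose σ a ha hσa using hφ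
  have hσ : Function.Injective σ :=
    Function.Injective.of_map_basis_eq_smul (f := φ.toLinearEquiv.toLinearMap) φ.injective ha hσa
  obtain ⟨τ, hτ, hστ⟩ := Fin.exists_injective_of_injective_succ hσ
  set w := (φ ((0 : L), (1 : ℝ))).1
  set π := fstAddSndSMul w (lie_fst_map_zero_one φ)
  refine basesEquivalent_of_lieHom (π.comp (φ.toLieHom.comp lieInl)) hτ fun i => ?_
  have hψ : π.comp (φ.toLieHom.comp lieInl) (B i) = a i.castSucc • π (E' (σ i.castSucc)) := by
    rw [← map_smul, ← hσa, hE]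
    rfl
  rcases hστ i with h | ⟨h, hσlast⟩
  · exact ⟨a i.castSucc, ha _, by rw [hψ, h, hE']; simp [π]⟩
  · have hw : w = a (Fin.last n) • B' (τ i) := by
      simp [w, ← hlast, hσa, hσlast, hE']
    exact ⟨a i.castSucc * a (Fin.last n), mul_ne_zero (ha _) (ha _), by
      rw [hψ, h, hlast']; simp [π, hw, smul_smul]⟩

theorem inequivalent_nice_bases_extend_general {L : Type} [LieRing L] [LieAlgebra ℝ L]
    {n : ℕ}
    (B B' : Module.Basis (Fin n) ℝ L)
    (hB : IsNiceBasis B) (hB' : IsNiceBasis B')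
    (hneq : ¬ BasesEquivalent B B')
    (E E' : Module.Basis (Fin (n + 1)) ℝ (L × ℝ))
    (hE : (∀ i : Fin n, E i.castSucc = (B i, 0)) ∧ E (Fin.last n) = (0, 1))
    (hE' : (∀ i : Fin n, E' i.castSucc = (B' i, 0)) ∧ E' (Fin.last n) = (0, 1)) :
    IsNiceBasis E ∧ IsNiceBasis E' ∧ ¬ BasesEquivalent E E' :=
  ⟨isNiceBasis_extend hB hE.1 hE.2, isNiceBasis_extend hB' hE'.1 hE'.2,
    fun h => hneq (h.of_extend hE.1 hE.2 hE'.1 hE'.2)⟩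

/-- Extending two inequivalent nice bases of `𝔤` by the central vector `(0,1)` gives two
inequivalent nice bases of `𝔤 × ℝ`. -/
theorem inequivalent_nice_bases_extend {L : Type} [LieRing L] [LieAlgebra ℝ L]
    [LieRing.IsNilpotent L] {n : ℕ}
    (B B' : Module.Basis (Fin n) ℝ L)
    (hB : IsNiceBasis B) (hB' : IsNiceBasis B')
    (hneq : ¬ BasesEquivalent B B')
    (E E' : Module.Basis (Fin (n + 1)) ℝ (L × ℝ))
    (hE : (∀ i : Fin n, E i.castSucc = (B i, 0)) ∧ E (Fin.last n) = (0, 1))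
    (hE' : (∀ i : Fin n, E' i.castSucc = (B' i, 0)) ∧ E' (Fin.last n) = (0, 1)) :
    IsNiceBasis E ∧ IsNiceBasis E' ∧ ¬ BasesEquivalent E E' :=
  inequivalent_nice_bases_extend_general B B' hB hB' hneq E E' hE hE'
end

section
/- For every positive integer n there exists a real nilpotent Lie algebra 𝔥 of dimension 6n admitting at least n+1 pairwise inequivalent nice bases. -/
/-!
Take for `𝔥` the direct sum of `n` copies of `𝔫 = 𝔥₃ ⊕ 𝔥₃`, the sum of two Heisenberg algebras.
Besides its standard nice basis `(x₁, y₁, z₁, x₂, y₂, z₂)`, the algebra `𝔫` has the mixed nice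
basis `(x₁ ± x₂, y₁ ± y₂, z₁ ± z₂)`. For `0 ≤ m ≤ n` take the standard basis on the first `m`
copies and the mixed one on the remaining `n - m` copies.

An equivalence of bases maps each basis vector to a nonzero multiple of a basis vector, and does
so bijectively, so it preserves the number of basis vectors `v` for which `ad v` has rank at least
two. Each standard basis of `𝔫` has no such vector and each mixed one has four
(`x₁ ± x₂`, `y₁ ± y₂`), so the `m`-th basis of `𝔥` has `4 (n - m)` of them.
-/

open Finset DirectSum Module

noncomputable section

namespace IsNiceBasis

variable {L ι : Type} [LieRing L] [LieAlgebra ℝ L]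

theorem of_lie_eq_smul (b : Basis ι ℝ L) (c : ι → ι → ℝ) (f : ι → ι → ι)
    (hlie : ∀ i j, ⁅b i, b j⁆ = c i j • b (f i j))
    (hinj : ∀ i j j', c i j ≠ 0 → c i j' ≠ 0 → f i j = f i j' → j = j') :
    IsNiceBasis b := by
  classical
  refine ⟨fun i j => ⟨f i j, c i j, hlie i j⟩, fun i k j j' hj hj' => ?_⟩
  simp only [hlie, map_smul, b.repr_self, Finsupp.smul_apply, Finsupp.single_apply,
    smul_eq_mul, ne_eq, ite_eq_right_iff, mul_eq_zero, not_or, one_ne_zero, imp_false,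
    not_not] at hj hj'
  exact hinj i j j' hj.1 hj'.1 (hj.2.trans hj'.2.symm)

theorem reindex {ι' : Type} {b : Basis ι ℝ L} (hb : IsNiceBasis b) (e : ι ≃ ι') :
    IsNiceBasis (b.reindex e) := by
  obtain ⟨hlie, hrepr⟩ := hb
  refine ⟨fun i j => ?_, fun i k j j' hj hj' => ?_⟩
  · obtain ⟨k, a, hk⟩ := hlie (e.symm i) (e.symm j)
    exact ⟨e k, a, by simpa using hk⟩
  · simp only [Basis.reindex_apply, Basis.repr_reindex_apply] at hj hj'
    exact e.symm.injective (hrepr _ _ _ _ hj hj')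

end IsNiceBasis

section AdRank

variable {L : Type} [LieRing L] [LieAlgebra ℝ L]

def AdHasRankAtLeastTwo (v : L) : Prop :=
  ∃ x y : L, LinearIndependent ℝ ![⁅v, x⁆, ⁅v, y⁆]

theorem AdHasRankAtLeastTwo.smul_map {v : L} (hv : AdHasRankAtLeastTwo v) (φ : L ≃ₗ⁅ℝ⁆ L)
    {a : ℝ} (ha : a ≠ 0) : AdHasRankAtLeastTwo (a • φ v) := by
  obtain ⟨x, y, hxy⟩ := hv
  let ψ : L ≃ₗ[ℝ] L := φ.toLinearEquiv.trans (LinearEquiv.smulOfNeZero ℝ L a ha)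
  have hψ : ![⁅a • φ v, φ x⁆, ⁅a • φ v, φ y⁆] = ψ ∘ ![⁅v, x⁆, ⁅v, y⁆] := by
    ext i
    fin_cases i <;> simp [ψ, smul_lie, LieEquiv.map_lie]
  refine ⟨φ x, φ y, ?_⟩
  rw [hψ]
  exact (LinearMap.linearIndependent_iff ψ.toLinearMap ψ.ker).mpr hxy

theorem adHasRankAtLeastTwo_smul_map_iff (φ : L ≃ₗ⁅ℝ⁆ L) {a : ℝ} (ha : a ≠ 0) (v : L) :
    AdHasRankAtLeastTwo (a • φ v) ↔ AdHasRankAtLeastTwo v := by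
  refine ⟨fun h => ?_, fun h => h.smul_map φ ha⟩
  simpa [smul_smul, ha] using h.smul_map φ.symm (inv_ne_zero ha)

theorem not_adHasRankAtLeastTwo_of_forall_lie_eq_smul {v : L} (w : L)
    (h : ∀ x, ∃ c : ℝ, ⁅v, x⁆ = c • w) : ¬ AdHasRankAtLeastTwo v := by
  rintro ⟨x, y, hxy⟩
  obtain ⟨c, hc⟩ := h x
  obtain ⟨d, hd⟩ := h y
  rw [hc, hd, LinearIndependent.pair_iff] at hxy
  obtain ⟨rfl, hc⟩ := hxy d (-c) (by module)
  rw [neg_eq_zero] at hc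
  subst hc
  exact one_ne_zero (hxy 1 0 (by simp)).1

end AdRank

section Equivalence

variable {L ι : Type} [LieRing L] [LieAlgebra ℝ L] {B B' : Basis ι ℝ L}

theorem BasesEquivalent.exists_equiv [Finite ι] (h : BasesEquivalent B B') :
    ∃ (φ : L ≃ₗ⁅ℝ⁆ L) (σ : ι ≃ ι) (a : ι → ℝ), ∀ i, a i ≠ 0 ∧ φ (B i) = a i • B' (σ i) := by
  obtain ⟨φ, hφ⟩ := h
  choose σ a ha hσ using hφ
  have hli : LinearIndependent ℝ fun i => a i • B' (σ i) := by
    rw [show (fun i => a i • B' (σ i)) = ⇑(B.map φ.toLinearEquiv) from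
      funext fun i => by simp [hσ]]
    exact (B.map _).linearIndependent
  have hσ_inj : σ.Injective := by
    have := hli.units_smul fun i => (Units.mk0 (a i) (ha i))⁻¹
    rw [show ((fun i => (Units.mk0 (a i) (ha i))⁻¹) • fun i => a i • B' (σ i)) = B' ∘ σ from
      funext fun i => by simp [Units.smul_def, smul_smul, ha i]] at this
    exact this.injective.of_comp
  exact ⟨φ, Equiv.ofBijective σ (Finite.injective_iff_bijective.mp hσ_inj), a,
    fun i => ⟨ha i, hσ i⟩⟩

theorem BasesEquivalent.card_filter_eq [Fintype ι] (h : BasesEquivalent B B')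
    (P : L → Prop) [DecidablePred P]
    (hP : ∀ (φ : L ≃ₗ⁅ℝ⁆ L) (a : ℝ), a ≠ 0 → ∀ v, P (a • φ v) ↔ P v) :
    #{i | P (B i)} = #{i | P (B' i)} := by
  obtain ⟨φ, σ, a, h⟩ := h.exists_equiv
  refine card_equiv σ fun i => ?_
  have hB' : B' (σ i) = (a i)⁻¹ • φ (B i) := by
    rw [(h i).2, smul_smul, inv_mul_cancel₀ (h i).1, one_smul]
  simp [hB', hP φ _ (inv_ne_zero (h i).1)]

end Equivalence

theorem Module.Basis.card_filter_reindex {ι ι' R M : Type*} [Fintype ι] [Fintype ι'] [Semiring R]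
    [AddCommMonoid M] [Module R M] (b : Basis ι R M) (e : ι ≃ ι') (P : M → Prop)
    [DecidablePred P] : #{i | P (b.reindex e i)} = #{i | P (b i)} :=
  card_equiv e.symm (by simp)

theorem LieAlgebra.isNilpotent_of_lie_lie_eq_zero {R L : Type*} [CommRing R] [LieRing L]
    [LieAlgebra R L] [IsNoetherian R L] (h : ∀ x y z : L, ⁅x, ⁅y, z⁆⁆ = 0) :
    LieRing.IsNilpotent L :=
  (LieAlgebra.isNilpotent_iff_forall (R := R)).mpr fun x =>
    ⟨2, LinearMap.ext fun y => by simp [pow_two, h]⟩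

section DirectSum

variable {ι : Type} {L : ι → Type} [∀ i, LieRing (L i)]

theorem DirectSum.lie_of_left [DecidableEq ι] {i : ι} (v : L i) (x : ⨁ i, L i) :
    ⁅of L i v, x⁆ = of L i ⁅v, x i⁆ := by
  ext j
  rw [bracket_apply]
  by_cases hj : j = i
  · subst hj
    simp
  · simp [of_eq_of_ne _ _ _ hj]

variable [∀ i, LieAlgebra ℝ (L i)] {κ : ι → Type}

def directSumBasis (b : ∀ i, Basis (κ i) ℝ (L i)) : Basis (Σ i, κ i) ℝ (⨁ i, L i) :=
  DFinsupp.basis b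

variable (b : ∀ i, Basis (κ i) ℝ (L i))

theorem directSumBasis_repr_apply (x : ⨁ i, L i) (i : ι) (j : κ i) :
    (directSumBasis b).repr x ⟨i, j⟩ = (b i).repr (x i) j :=
  rfl

variable [DecidableEq ι]

theorem directSumBasis_apply (i : ι) (j : κ i) :
    directSumBasis b ⟨i, j⟩ = of L i (b i j) := by
  ext k
  simp [directSumBasis, DFinsupp.basis, of_apply]

theorem eq_of_directSumBasis_repr_of_ne_zero {i i' : ι} {x : L i} {j : κ i'}
    (h : (directSumBasis b).repr (of L i x) ⟨i', j⟩ ≠ 0) : i' = i := by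
  contrapose! h
  rw [directSumBasis_repr_apply, of_eq_of_ne _ _ _ h, map_zero, Finsupp.zero_apply]

theorem IsNiceBasis.directSumBasis (hb : ∀ i, IsNiceBasis (b i)) :
    IsNiceBasis (directSumBasis b) := by
  refine ⟨fun ⟨i, j⟩ ⟨i', j'⟩ => ?_, fun ⟨i, j⟩ ⟨i', k⟩ ⟨i₁, j₁⟩ ⟨i₂, j₂⟩ h₁ h₂ => ?_⟩
  · simp only [directSumBasis_apply, lie_of]
    split_ifs with hii'
    · subst hii'
      obtain ⟨k, a, hk⟩ := (hb i).1 j j'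
      exact ⟨⟨i, k⟩, a, by rw [hk, of_smul, directSumBasis_apply]⟩
    · exact ⟨⟨i, j⟩, 0, by rw [zero_smul]⟩
  · obtain rfl : i₁ = i := by
      by_contra h
      simp [directSumBasis_apply, lie_of_of_ne _ (Ne.symm h)] at h₁
    obtain rfl : i₂ = i₁ := by
      by_contra h
      simp [directSumBasis_apply, lie_of_of_ne _ (Ne.symm h)] at h₂
    simp only [directSumBasis_apply, lie_of_same] at h₁ h₂
    obtain rfl := eq_of_directSumBasis_repr_of_ne_zero b h₁
    rw [directSumBasis_repr_apply, of_eq_same] at h₁ h₂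
    rw [(hb _).2 _ _ _ _ h₁ h₂]

theorem adHasRankAtLeastTwo_directSum_of_iff {i : ι} (v : L i) :
    AdHasRankAtLeastTwo (of L i v) ↔ AdHasRankAtLeastTwo v := by
  have hker : LinearMap.ker (lof ℝ ι L i) = ⊥ :=
    LinearMap.ker_eq_bot.mpr (of_injective i)
  have hlie (x y : ⨁ i, L i) :
      ![⁅of L i v, x⁆, ⁅of L i v, y⁆] = lof ℝ ι L i ∘ ![⁅v, x i⁆, ⁅v, y i⁆] := by
    ext k
    fin_cases k <;> simp [lie_of_left, lof_eq_of]
  constructor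
  · rintro ⟨x, y, hxy⟩
    rw [hlie, LinearMap.linearIndependent_iff _ hker] at hxy
    exact ⟨x i, y i, hxy⟩
  · rintro ⟨x, y, hxy⟩
    refine ⟨of L i x, of L i y, ?_⟩
    rw [hlie, LinearMap.linearIndependent_iff _ hker]
    simpa using hxy

end DirectSum

theorem Fin.sum_ite_val_lt (n m c : ℕ) :
    (∑ p : Fin n, if (p : ℕ) < m then 0 else c) = c * (n - m) := by
  rw [Fin.sum_univ_eq_sum_range (fun p => if p < m then 0 else c), sum_ite, sum_const_zero,
    zero_add, Finset.sum_const, smul_eq_mul, mul_comm, ← Nat.card_Ico m n]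
  congr 2
  ext p
  simp only [mem_filter, mem_range, not_lt, mem_Ico]
  omega

def DoubleHeisenberg : Type := Fin 6 → ℝ

namespace DoubleHeisenberg

instance : AddCommGroup DoubleHeisenberg := inferInstanceAs (AddCommGroup (Fin 6 → ℝ))

instance : Module ℝ DoubleHeisenberg := inferInstanceAs (Module ℝ (Fin 6 → ℝ))

def stdBasis : Basis (Fin 6) ℝ DoubleHeisenberg := Pi.basisFun ℝ (Fin 6)

instance : FiniteDimensional ℝ DoubleHeisenberg := .of_basis stdBasis

@[simp] theorem add_apply (u v : DoubleHeisenberg) (k : Fin 6) : (u + v) k = u k + v k := rfl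

@[simp] theorem sub_apply (u v : DoubleHeisenberg) (k : Fin 6) : (u - v) k = u k - v k := rfl

@[simp] theorem zero_apply (k : Fin 6) : (0 : DoubleHeisenberg) k = 0 := rfl

@[simp] theorem smul_apply (a : ℝ) (u : DoubleHeisenberg) (k : Fin 6) : (a • u) k = a * u k := rfl

@[simp] theorem stdBasis_apply (i k : Fin 6) : stdBasis i k = if i = k then 1 else 0 :=
  (congrFun (Pi.basisFun_apply ℝ (Fin 6) i) k).trans (by simp [Pi.single_apply, eq_comm])

-- In the coordinates `(x₁, y₁, z₁, x₂, y₂, z₂)` of `stdBasis`: `⁅x₁, y₁⁆ = z₁`, `⁅x₂, y₂⁆ = z₂`.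
instance : Bracket DoubleHeisenberg DoubleHeisenberg where
  bracket u v := (u 0 * v 1 - u 1 * v 0) • stdBasis 2 + (u 3 * v 4 - u 4 * v 3) • stdBasis 5

theorem lie_def (u v : DoubleHeisenberg) :
    ⁅u, v⁆ = (u 0 * v 1 - u 1 * v 0) • stdBasis 2 + (u 3 * v 4 - u 4 * v 3) • stdBasis 5 :=
  rfl

instance : LieRing DoubleHeisenberg where
  add_lie u v w := by simp only [lie_def, add_apply]; module
  lie_add u v w := by simp only [lie_def, add_apply]; module
  lie_self u := by simp only [lie_def]; module
  leibniz_lie u v w := by simp [lie_def]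

instance : LieAlgebra ℝ DoubleHeisenberg where
  lie_smul a u v := by simp only [lie_def, smul_apply]; module

theorem lie_lie (u v w : DoubleHeisenberg) : ⁅u, ⁅v, w⁆⁆ = 0 := by
  simp [lie_def]

def stdConst : Fin 6 → Fin 6 → ℤ
  | 0, 1 | 3, 4 => 1 | 1, 0 | 4, 3 => -1 | _, _ => 0

def stdTarget : Fin 6 → Fin 6 → Fin 6
  | 0, 1 | 1, 0 => 2 | 3, 4 | 4, 3 => 5 | _, _ => 0

theorem lie_stdBasis (i j : Fin 6) :
    ⁅stdBasis i, stdBasis j⁆ = (stdConst i j : ℝ) • stdBasis (stdTarget i j) := by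
  fin_cases i <;> fin_cases j <;> simp [lie_def, stdConst, stdTarget]

theorem isNiceBasis_stdBasis : IsNiceBasis stdBasis :=
  .of_lie_eq_smul _ _ _ lie_stdBasis (by simp only [ne_eq, Int.cast_eq_zero]; decide)

def mixedVec : Fin 6 → DoubleHeisenberg :=
  ![stdBasis 0 + stdBasis 3, stdBasis 0 - stdBasis 3, stdBasis 1 + stdBasis 4,
    stdBasis 1 - stdBasis 4, stdBasis 2 + stdBasis 5, stdBasis 2 - stdBasis 5]

theorem linearIndependent_mixedVec : LinearIndependent ℝ mixedVec := by
  rw [Fintype.linearIndependent_iff]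
  intro g hg
  obtain ⟨h₀, h₁, h₂, h₃, h₄, h₅⟩ : g 0 + g 1 = 0 ∧ g 2 + g 3 = 0 ∧ g 4 + g 5 = 0 ∧
      g 0 - g 1 = 0 ∧ g 2 - g 3 = 0 ∧ g 4 - g 5 = 0 := by
    simpa [Fin.sum_univ_six, mixedVec, Fin.forall_fin_succ, ← sub_eq_add_neg] using
      fun k => congrFun hg k
  intro i
  fin_cases i <;> simp only [Fin.zero_eta, Fin.mk_one, Fin.reduceFinMk] <;> linarith

def mixedBasis : Basis (Fin 6) ℝ DoubleHeisenberg :=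
  basisOfLinearIndependentOfCardEqFinrank linearIndependent_mixedVec
    (by simp [finrank_eq_card_basis stdBasis])

def mixedConst : Fin 6 → Fin 6 → ℤ
  | 0, 2 | 0, 3 | 1, 2 | 1, 3 => 1 | 2, 0 | 3, 0 | 2, 1 | 3, 1 => -1 | _, _ => 0

def mixedTarget : Fin 6 → Fin 6 → Fin 6
  | 0, 2 | 2, 0 | 1, 3 | 3, 1 => 4 | 0, 3 | 3, 0 | 1, 2 | 2, 1 => 5 | _, _ => 0

theorem lie_mixedBasis (i j : Fin 6) :
    ⁅mixedBasis i, mixedBasis j⁆ = (mixedConst i j : ℝ) • mixedBasis (mixedTarget i j) := by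
  simp only [mixedBasis, coe_basisOfLinearIndependentOfCardEqFinrank]
  fin_cases i <;> fin_cases j <;> simp [lie_def, mixedVec, mixedConst, mixedTarget] <;> module

theorem isNiceBasis_mixedBasis : IsNiceBasis mixedBasis :=
  .of_lie_eq_smul _ _ _ lie_mixedBasis (by simp only [ne_eq, Int.cast_eq_zero]; decide)

theorem not_adHasRankAtLeastTwo_of_apply_eq_zero {u : DoubleHeisenberg}
    (h : u 3 = 0 ∧ u 4 = 0 ∨ u 0 = 0 ∧ u 1 = 0) : ¬ AdHasRankAtLeastTwo u := by
  rcases h with ⟨h₃, h₄⟩ | ⟨h₀, h₁⟩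
  · exact not_adHasRankAtLeastTwo_of_forall_lie_eq_smul (stdBasis 2)
      fun x => ⟨u 0 * x 1 - u 1 * x 0, by simp [lie_def, h₃, h₄]⟩
  · exact not_adHasRankAtLeastTwo_of_forall_lie_eq_smul (stdBasis 5)
      fun x => ⟨u 3 * x 4 - u 4 * x 3, by simp [lie_def, h₀, h₁]⟩

theorem not_adHasRankAtLeastTwo_stdBasis (j : Fin 6) : ¬ AdHasRankAtLeastTwo (stdBasis j) :=
  not_adHasRankAtLeastTwo_of_apply_eq_zero (by fin_cases j <;> simp)

theorem adHasRankAtLeastTwo_of_lie_eq {v x y : DoubleHeisenberg} (hx : ⁅v, x⁆ = stdBasis 2)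
    (hy : ⁅v, y⁆ = stdBasis 5) : AdHasRankAtLeastTwo v := by
  refine ⟨x, y, ?_⟩
  rw [hx, hy, LinearIndependent.pair_iff]
  intro s t hst
  have h₂ := congrFun hst 2
  have h₅ := congrFun hst 5
  exact ⟨by simpa using h₂, by simpa using h₅⟩

theorem adHasRankAtLeastTwo_mixedBasis_iff (j : Fin 6) :
    AdHasRankAtLeastTwo (mixedBasis j) ↔ (j : ℕ) < 4 := by
  simp only [mixedBasis, coe_basisOfLinearIndependentOfCardEqFinrank]
  fin_cases j
  · exact iff_of_true (adHasRankAtLeastTwo_of_lie_eq (x := stdBasis 1) (y := stdBasis 4)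
      (by simp [lie_def, mixedVec]) (by simp [lie_def, mixedVec])) (by decide)
  · exact iff_of_true (adHasRankAtLeastTwo_of_lie_eq (x := stdBasis 1) (y := -stdBasis 4)
      (by simp [lie_def, mixedVec]) (by simp [lie_def, mixedVec])) (by decide)
  · exact iff_of_true (adHasRankAtLeastTwo_of_lie_eq (x := -stdBasis 0) (y := -stdBasis 3)
      (by simp [lie_def, mixedVec]) (by simp [lie_def, mixedVec])) (by decide)
  · exact iff_of_true (adHasRankAtLeastTwo_of_lie_eq (x := -stdBasis 0) (y := stdBasis 3)
      (by simp [lie_def, mixedVec]) (by simp [lie_def, mixedVec])) (by decide)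
  · exact iff_of_false (not_adHasRankAtLeastTwo_of_apply_eq_zero (by simp [mixedVec]))
      (by decide)
  · exact iff_of_false (not_adHasRankAtLeastTwo_of_apply_eq_zero (by simp [mixedVec]))
      (by decide)

theorem isNilpotent_directSum (n : ℕ) : LieRing.IsNilpotent (⨁ _ : Fin n, DoubleHeisenberg) :=
  LieAlgebra.isNilpotent_of_lie_lie_eq_zero (R := ℝ) fun x y z => by
    ext i
    simp [bracket_apply, lie_lie]

def splitBasis (n m : ℕ) : Basis (Σ _ : Fin n, Fin 6) ℝ (⨁ _ : Fin n, DoubleHeisenberg) :=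
  directSumBasis fun p => if (p : ℕ) < m then stdBasis else mixedBasis

theorem isNiceBasis_splitBasis (n m : ℕ) : IsNiceBasis (splitBasis n m) :=
  .directSumBasis _ fun p => by
    split_ifs
    exacts [isNiceBasis_stdBasis, isNiceBasis_mixedBasis]

open scoped Classical in
theorem card_adHasRankAtLeastTwo_splitBasis (n m : ℕ) :
    #{x | AdHasRankAtLeastTwo (splitBasis n m x)} = 4 * (n - m) := by
  rw [card_filter, Fintype.sum_sigma, ← Fin.sum_ite_val_lt]
  simp only [splitBasis, directSumBasis_apply, adHasRankAtLeastTwo_directSum_of_iff]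
  refine sum_congr rfl fun p _ => ?_
  by_cases hp : (p : ℕ) < m
  · simp [hp, not_adHasRankAtLeastTwo_stdBasis]
  · simp only [hp, if_false, adHasRankAtLeastTwo_mixedBasis_iff, sum_boole, Nat.cast_id]
    rfl

end DoubleHeisenberg

end

theorem exists_nilpotent_with_many_nice_bases_general (n : ℕ) :
    ∃ (L : Type) (_ : LieRing L) (_ : LieAlgebra ℝ L),
      LieRing.IsNilpotent L ∧ Module.finrank ℝ L = 6 * n ∧
      ∃ Bs : Fin (n + 1) → Module.Basis (Fin (6 * n)) ℝ L,
        (∀ m, IsNiceBasis (Bs m)) ∧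
        ∀ m m', m ≠ m' → ¬ BasesEquivalent (Bs m) (Bs m') := by
  classical
  have hcard : Fintype.card (Σ _ : Fin n, Fin 6) = 6 * n := by simp [mul_comm]
  let e := Fintype.equivFinOfCardEq hcard
  refine ⟨⨁ _ : Fin n, DoubleHeisenberg, inferInstance, inferInstance,
    DoubleHeisenberg.isNilpotent_directSum n,
    by rw [finrank_eq_card_basis (DoubleHeisenberg.splitBasis n 0), hcard],
    fun m => (DoubleHeisenberg.splitBasis n m).reindex e,
    fun m => (DoubleHeisenberg.isNiceBasis_splitBasis n m).reindex e, ?_⟩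
  intro m m' hne hequiv
  have hcount := hequiv.card_filter_eq _ adHasRankAtLeastTwo_smul_map_iff
  simp only [Basis.card_filter_reindex _ _ AdHasRankAtLeastTwo,
    DoubleHeisenberg.card_adHasRankAtLeastTwo_splitBasis] at hcount
  have hm := m.isLt
  have hm' := m'.isLt
  exact hne (Fin.ext (by omega))

/-- For every `n ≥ 1` there is a real nilpotent Lie algebra of dimension `6n` with at
least `n + 1` pairwise inequivalent nice bases. -/
theorem exists_nilpotent_with_many_nice_bases (n : ℕ) (hn : 0 < n) :
    ∃ (L : Type) (_ : LieRing L) (_ : LieAlgebra ℝ L),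
      LieRing.IsNilpotent L ∧ Module.finrank ℝ L = 6 * n ∧
      ∃ Bs : Fin (n + 1) → Module.Basis (Fin (6 * n)) ℝ L,
        (∀ m, IsNiceBasis (Bs m)) ∧
        ∀ m m', m ≠ m' → ¬ BasesEquivalent (Bs m) (Bs m') :=
  exists_nilpotent_with_many_nice_bases_general n
end

section
/- Let M be an m×n integer matrix, and let the group G = (ℝ∖{0})^n act on the set V̊ = (ℝ∖{0})^m by (g·c)_a = (∏_{j=1}^n g_j^{M_{aj}}) · c_a. Choose subsets J₂ ⊆ J ⊆ {1,…,m} such that the rows of M indexed by J₂ form a maximal linearly independent family of rows of the mod-2 reduction of M over ℤ/2ℤ, and the rows of M indexed by J form a maximal linearly independent family of rows of M over ℝ. Let W̊ = { c ∈ V̊ : c_a = 1 for every a ∈ J₂, and c_a ∈ {1,−1} for every a ∈ J∖J₂ }. Then W̊ is a fundamental domain for the action: every G-orbit in V̊ intersects W̊ in exactly one point. -/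
/-!
Writing a nonzero real as `±exp l` identifies the group `ℝ∖{0}` with `ZMod 2 × ℝ` (`signExp`).
In these coordinates `g ↦ e^M(g) ⊙ c` becomes the pair of affine maps `β ↦ M̄β + σ` over `ZMod 2`
and `x ↦ Mx + ℓ` over `ℝ`, and `W̊` consists of the points whose `ZMod 2`-coordinates vanish on `J₂`
and whose real coordinates vanish on `J`. As the rows indexed by `J` form a basis of the row space
of `M`, exactly one point of `Mℝⁿ + ℓ` vanishes on `J`: it exists because the system on `J` has full
rank, and it is unique because a linear form vanishing on a spanning family of rows vanishes on all
rows. The same holds over `ZMod 2` with `J₂`.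
-/

open Submodule

section LinearAlgebra

variable {K ι κ : Type*} [Field K] [Fintype κ]

theorem exists_dotProduct_eq_of_linearIndependent [Fintype ι] {v : ι → κ → K}
    (hv : LinearIndependent K v) (t : ι → K) : ∃ x : κ → K, ∀ i, v i ⬝ᵥ x = t i := by
  classical
  have hrange : LinearMap.range (Matrix.of v).mulVecLin = ⊤ := by
    apply Submodule.eq_top_of_finrank_eq
    rw [Module.finrank_pi, ← hv.rank_matrix]
    rfl
  obtain ⟨x, hx⟩ := LinearMap.range_eq_top.mp hrange t
  exact ⟨x, congrFun hx⟩

theorem dotProduct_eq_zero_of_mem_span {v : ι → κ → K} {u x : κ → K}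
    (hu : u ∈ span K (Set.range v)) (hx : ∀ i, v i ⬝ᵥ x = 0) : u ⬝ᵥ x = 0 := by
  induction hu using Submodule.span_induction with
  | mem _ h => obtain ⟨i, rfl⟩ := h; exact hx i
  | zero => exact zero_dotProduct x
  | add _ _ _ _ h₁ h₂ => rw [add_dotProduct, h₁, h₂, add_zero]
  | smul _ _ _ h => rw [smul_dotProduct, h, smul_zero]

theorem existsUnique_translate_vanishing_on_basis (J : Finset ι) (v : ι → κ → K)
    (hindep : LinearIndependent K fun b : J => v b)
    (hspan : ∀ a, v a ∈ span K (Set.range fun b : J => v b)) (t : ι → K) :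
    ∃! y : ι → K, (∀ a ∈ J, y a = 0) ∧ ∃ x, y = fun a => v a ⬝ᵥ x + t a := by
  obtain ⟨x, hx⟩ := exists_dotProduct_eq_of_linearIndependent hindep fun b => -t b
  refine ⟨fun a => v a ⬝ᵥ x + t a, ⟨fun a ha => ?_, x, rfl⟩, ?_⟩
  · linear_combination hx ⟨a, ha⟩
  rintro _ ⟨hy, x', rfl⟩
  funext a
  have hdiff : v a ⬝ᵥ (x' - x) = 0 := dotProduct_eq_zero_of_mem_span (hspan a) fun b => by
    rw [dotProduct_sub, hx b, sub_neg_eq_add]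
    exact hy b b.2
  rw [dotProduct_sub, sub_eq_zero] at hdiff
  rw [hdiff]

end LinearAlgebra

namespace DiagonalAction

noncomputable def signExp (s : ZMod 2) (l : ℝ) : ℝ := if s = 0 then Real.exp l else -Real.exp l

theorem zmod_two_eq_zero_or_one : ∀ s : ZMod 2, s = 0 ∨ s = 1 := by decide

theorem signExp_zero (l : ℝ) : signExp 0 l = Real.exp l := if_pos rfl

theorem signExp_one (l : ℝ) : signExp 1 l = -Real.exp l := if_neg (by decide)

theorem signExp_ne_zero (s : ZMod 2) (l : ℝ) : signExp s l ≠ 0 := by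
  rcases zmod_two_eq_zero_or_one s with rfl | rfl <;>
    simp [signExp_zero, signExp_one, Real.exp_ne_zero]

theorem abs_signExp (s : ZMod 2) (l : ℝ) : |signExp s l| = Real.exp l := by
  rcases zmod_two_eq_zero_or_one s with rfl | rfl <;> simp [signExp_zero, signExp_one]

theorem signExp_add (s s' : ZMod 2) (l l' : ℝ) :
    signExp (s + s') (l + l') = signExp s l * signExp s' l' := by
  rcases zmod_two_eq_zero_or_one s with rfl | rfl <;>
    rcases zmod_two_eq_zero_or_one s' with rfl | rfl <;>
    simp [signExp_zero, signExp_one, Real.exp_add, show (1 : ZMod 2) + 1 = 0 from rfl]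

theorem signExp_zpow (s : ZMod 2) (l : ℝ) (k : ℤ) :
    signExp s l ^ k = signExp (k * s) (k * l) := by
  have hexp : Real.exp l ^ k = Real.exp (k * l) := by
    rw [← Real.rpow_intCast, ← Real.exp_mul, mul_comm]
  rcases zmod_two_eq_zero_or_one s with rfl | rfl
  · rw [mul_zero, signExp_zero, signExp_zero, hexp]
  rcases Int.even_or_odd k with hk | hk
  · rw [mul_one, ZMod.intCast_eq_zero_iff_even.2 hk, signExp_one, signExp_zero, hk.neg_zpow,
      hexp]
  · rw [mul_one, ZMod.intCast_eq_one_iff_odd.2 hk, signExp_one, signExp_one, hk.neg_zpow, hexp]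

theorem signExp_eq_one_iff {s : ZMod 2} {l : ℝ} : signExp s l = 1 ↔ s = 0 ∧ l = 0 := by
  rcases zmod_two_eq_zero_or_one s with rfl | rfl
  · simp [signExp_zero]
  · simp only [signExp_one, one_ne_zero, false_and, iff_false]
    linarith [Real.exp_pos l]

theorem signExp_eq_one_or_neg_one_iff {s : ZMod 2} {l : ℝ} :
    signExp s l = 1 ∨ signExp s l = -1 ↔ l = 0 := by
  rw [← abs_eq zero_le_one, abs_signExp, Real.exp_eq_one_iff]

theorem exists_signExp_eq {r : ℝ} (hr : r ≠ 0) : ∃ s l, signExp s l = r := by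
  rcases hr.lt_or_gt with h | h
  · exact ⟨1, Real.log (-r), by rw [signExp_one, Real.exp_log (neg_pos.2 h), neg_neg]⟩
  · exact ⟨0, Real.log r, by rw [signExp_zero, Real.exp_log h]⟩

theorem prod_signExp_zpow {σ : Type*} (t : Finset σ) (s : σ → ZMod 2) (l : σ → ℝ) (k : σ → ℤ) :
    ∏ j ∈ t, signExp (s j) (l j) ^ k j = signExp (∑ j ∈ t, k j * s j) (∑ j ∈ t, k j * l j) := by
  classical
  induction t using Finset.induction_on with
  | empty => simp [signExp_zero]
  | insert j t hj ih => rw [Finset.prod_insert hj, ih, signExp_zpow, ← signExp_add,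
      Finset.sum_insert hj, Finset.sum_insert hj]

def fundamentalDomain {ι : Type*} (J₂ J : Finset ι) : Set (ι → ℝ) :=
  {w | (∀ a, w a ≠ 0) ∧ (∀ a ∈ J₂, w a = 1) ∧ (∀ a ∈ J, a ∉ J₂ → w a = 1 ∨ w a = -1)}

theorem signExp_mem_fundamentalDomain_iff {ι : Type*} {J₂ J : Finset ι} (hJJ : J₂ ⊆ J)
    {s : ι → ZMod 2} {l : ι → ℝ} :
    (fun a => signExp (s a) (l a)) ∈ fundamentalDomain J₂ J ↔
      (∀ a ∈ J₂, s a = 0) ∧ ∀ a ∈ J, l a = 0 := by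
  constructor
  · rintro ⟨-, hJ₂, hJ⟩
    refine ⟨fun a ha => (signExp_eq_one_iff.1 (hJ₂ a ha)).1, fun a ha => ?_⟩
    by_cases ha₂ : a ∈ J₂
    · exact (signExp_eq_one_iff.1 (hJ₂ a ha₂)).2
    · exact signExp_eq_one_or_neg_one_iff.1 (hJ a ha ha₂)
  · rintro ⟨hs, hl⟩
    exact ⟨fun a => signExp_ne_zero _ _,
      fun a ha => signExp_eq_one_iff.2 ⟨hs a ha, hl a (hJJ ha)⟩,
      fun a ha _ => signExp_eq_one_or_neg_one_iff.2 (hl a ha)⟩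

end DiagonalAction

open DiagonalAction

/-- The set `W̊`, cut out by normalizing the coordinates indexed by `J₂` to `1` and those
indexed by `J \ J₂` to `±1`, is a fundamental domain for the action of the diagonal group
`(ℝ∖{0})ⁿ` on `(ℝ∖{0})ᵐ` through the root matrix `M`: each orbit meets it exactly once. -/
theorem fundamental_domain_diagonal_action (m n : ℕ) (M : Matrix (Fin m) (Fin n) ℤ)
    (J₂ J : Finset (Fin m)) (hJJ : J₂ ⊆ J)
    (hindep₂ : LinearIndependent (ZMod 2)
      (fun a : J₂ => fun j : Fin n => (M a.1 j : ZMod 2)))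
    (hspan₂ : ∀ a : Fin m, (fun j : Fin n => (M a j : ZMod 2)) ∈
      Submodule.span (ZMod 2)
        (Set.range fun b : J₂ => fun j : Fin n => (M b.1 j : ZMod 2)))
    (hindep : LinearIndependent ℝ
      (fun a : J => fun j : Fin n => (M a.1 j : ℝ)))
    (hspan : ∀ a : Fin m, (fun j : Fin n => (M a j : ℝ)) ∈
      Submodule.span ℝ
        (Set.range fun b : J => fun j : Fin n => (M b.1 j : ℝ))) :
    ∀ c : Fin m → ℝ, (∀ a, c a ≠ 0) →
      ∃! w : Fin m → ℝ,
        ((∀ a, w a ≠ 0) ∧ (∀ a ∈ J₂, w a = 1) ∧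
          (∀ a ∈ J, a ∉ J₂ → w a = 1 ∨ w a = -1)) ∧
        ∃ g : Fin n → ℝ, (∀ j, g j ≠ 0) ∧
          ∀ a, w a = (∏ j, g j ^ M a j) * c a := by
  intro c hc
  choose σ ℓ hcσℓ using fun a => exists_signExp_eq (hc a)
  have act : ∀ (β : Fin n → ZMod 2) (x : Fin n → ℝ) a,
      (∏ j, signExp (β j) (x j) ^ M a j) * c a =
        signExp ((fun j => (M a j : ZMod 2)) ⬝ᵥ β + σ a) ((fun j => (M a j : ℝ)) ⬝ᵥ x + ℓ a) := by
    intro β x a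
    rw [← hcσℓ, prod_signExp_zpow, ← signExp_add]
    rfl
  obtain ⟨s, ⟨hs, β, rfl⟩, hs_uniq⟩ := existsUnique_translate_vanishing_on_basis J₂
    (fun a j => (M a j : ZMod 2)) hindep₂ hspan₂ σ
  obtain ⟨l, ⟨hl, x, rfl⟩, hl_uniq⟩ := existsUnique_translate_vanishing_on_basis J
    (fun a j => (M a j : ℝ)) hindep hspan ℓ
  refine ⟨_, ⟨(signExp_mem_fundamentalDomain_iff hJJ).2 ⟨hs, hl⟩,
    fun j => signExp (β j) (x j), fun j => signExp_ne_zero _ _, fun a => (act β x a).symm⟩, ?_⟩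
  rintro w ⟨hw, g, hg, hwg⟩
  choose β' x' hg' using fun j => exists_signExp_eq (hg j)
  have hw' : w = fun a => signExp ((fun j => (M a j : ZMod 2)) ⬝ᵥ β' + σ a)
      ((fun j => (M a j : ℝ)) ⬝ᵥ x' + ℓ a) := by
    funext a
    rw [hwg, ← act]
    simp only [hg']
  rw [hw'] at hw ⊢
  obtain ⟨hs', hl'⟩ := (signExp_mem_fundamentalDomain_iff hJJ).1 hw
  exact congrArg₂ (fun s l a => signExp (s a) (l a)) (hs_uniq _ ⟨hs', β', rfl⟩)
    (hl_uniq _ ⟨hl', x', rfl⟩)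
end

section
/- Let 𝔤 be a real nilpotent Lie algebra with a nice basis (e_1,…,e_n). Let g = (g_1,…,g_n) and h = (h_1,…,h_n) be tuples of nonzero real numbers with sign(g_i) = sign(h_i) for every i, and suppose that g_k/(g_i g_j) = h _k/(h_i h_j) whenever [e_i,e_j] is a nonzero multiple of e_k. Then there is a Lie algebra automorphism φ of 𝔤 (which can be taken diagonal with positive entries in the basis) such that the diagonal metrics ⟨·,·⟩_g = Σ_i g_i e^i⊗e^i and ⟨·,·⟩_h = Σ_i h_i e^i⊗e^i satisfy ⟨φ(x), φ(y)⟩_h = ⟨x, y⟩_g for all x, y ∈ 𝔤; in particular the two metric Lie algebras are isometric. -/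
/-! The isometry is the diagonal rescaling `e i ↦ √(g i / h i) • e i`; the signs make
`g i / h i` positive. The ratio condition says that the scale factors multiply along every
nonzero bracket `⁅e i, e j⁆ = a • e k`, which is what makes the rescaling a Lie algebra
automorphism, and `h i * (√(g i / h i))^2 = g i` makes it an isometry. -/

theorem Real.div_pos_of_sign_eq {a b : ℝ} (hs : Real.sign a = Real.sign b) (hb : b ≠ 0) :
    0 < a / b := by
  rcases lt_trichotomy a 0 with ha | rfl | ha <;> rcases hb.lt_or_gt with hb | hb <;>
    simp only [Real.sign_of_neg, Real.sign_of_pos, Real.sign_zero, *] at hs <;>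
    first | exact div_pos ha hb | exact div_pos_of_neg_of_neg ha hb | norm_num at hs

theorem div_eq_div_mul_div_of_div_mul_eq {K : Type*} [Field K] {a b c a' b' c' : K}
    (ha' : a' ≠ 0) (hb' : b' ≠ 0) (hc' : c' ≠ 0) (h : a / (b * c) = a' / (b' * c')) :
    a / a' = b / b' * (c / c') := by
  have hbc : b * c ≠ 0 := by
    rintro hbc
    rw [hbc, div_zero, eq_comm] at h
    exact div_ne_zero ha' (mul_ne_zero hb' hc') h
  rw [div_eq_div_iff hbc (mul_ne_zero hb' hc')] at h
  rw [div_mul_div_comm, div_eq_div_iff ha' (mul_ne_zero hb' hc')]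
  linear_combination h

namespace Module.Basis

variable {ι R L L' : Type*} [CommRing R] [LieRing L] [LieAlgebra R L] [LieRing L']
  [LieAlgebra R L']

theorem map_lie_of_map_lie_basis (e : Basis ι R L) (f : L →ₗ[R] L')
    (hf : ∀ i j, f ⁅e i, e j⁆ = ⁅f (e i), f (e j)⁆) (x y : L) : f ⁅x, y⁆ = ⁅f x, f y⁆ := by
  let bracket : L →ₗ[R] L →ₗ[R] L := LieModule.toEnd R L L
  let bracket' : L' →ₗ[R] L' →ₗ[R] L' := LieModule.toEnd R L' L'
  have hext : bracket.compr₂ f = bracket'.compl₁₂ f f :=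
    LinearMap.ext_basis e e (by simpa [bracket, bracket'] using hf)
  simpa [bracket, bracket'] using LinearMap.congr_fun₂ hext x y

noncomputable def unitsSMulLieEquiv (e : Basis ι R L) (w : ι → Rˣ)
    (hbr : ∀ i j, ∃ (k : ι) (a : R), ⁅e i, e j⁆ = a • e k)
    (hw : ∀ i j k (a : R), a ≠ 0 → ⁅e i, e j⁆ = a • e k → w k = w i * w j) : L ≃ₗ⁅R⁆ L :=
  { e.equiv (e.unitsSMul w) (Equiv.refl ι) with
    map_lie' := fun {x y} => by
      refine e.map_lie_of_map_lie_basis (e.equiv (e.unitsSMul w) (Equiv.refl ι)).toLinearMap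
        (fun i j => ?_) x y
      obtain ⟨k, a, hk⟩ := hbr i j
      rcases eq_or_ne a 0 with rfl | ha
      · simp [hk, unitsSMul_apply, Units.smul_def, smul_lie, lie_smul]
      · simp only [hk, map_smul, LinearEquiv.coe_coe, equiv_apply, Equiv.refl_apply,
          unitsSMul_apply, hw i j k a ha hk, Units.smul_def, Units.val_mul, smul_smul,
          lie_smul, smul_lie]
        ring_nf }

variable (e : Basis ι R L) (w : ι → Rˣ) (hbr : ∀ i j, ∃ (k : ι) (a : R), ⁅e i, e j⁆ = a • e k)
  (hw : ∀ i j k (a : R), a ≠ 0 → ⁅e i, e j⁆ = a • e k → w k = w i * w j)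

theorem unitsSMulLieEquiv_apply (x : L) :
    e.unitsSMulLieEquiv w hbr hw x = e.equiv (e.unitsSMul w) (Equiv.refl ι) x :=
  rfl

theorem unitsSMulLieEquiv_apply_basis (i : ι) :
    e.unitsSMulLieEquiv w hbr hw (e i) = w i • e i := by
  simp [unitsSMulLieEquiv_apply, unitsSMul_apply]

theorem repr_unitsSMulLieEquiv (x : L) (i : ι) :
    e.repr (e.unitsSMulLieEquiv w hbr hw x) i = w i * e.repr x i := by
  have h : (e.unitsSMul w).repr (e.unitsSMulLieEquiv w hbr hw x) = e.repr x := by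
    simp [unitsSMulLieEquiv_apply, Basis.equiv]
  have hi := congr($h i)
  rw [repr_unitsSMul, Units.smul_def, smul_eq_mul] at hi
  rw [← hi, ← mul_assoc, Units.mul_inv, one_mul]

end Module.Basis

theorem diagonal_metrics_isometric_general {L : Type} [LieRing L] [LieAlgebra ℝ L]
    {n : ℕ}
    (e : Module.Basis (Fin n) ℝ L) (he : IsNiceBasis e)
    (g h : Fin n → ℝ) (hh : ∀ i, h i ≠ 0)
    (hsign : ∀ i, Real.sign (g i) = Real.sign (h i))
    (hratio : ∀ i j k : Fin n, (∃ a : ℝ, a ≠ 0 ∧ ⁅e i, e j⁆ = a • e k) →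
      g k / (g i * g j) = h k / (h i * h j)) :
    ∃ φ : L ≃ₗ⁅ℝ⁆ L,
      (∀ i, ∃ d : ℝ, 0 < d ∧ φ (e i) = d • e i) ∧
      ∀ x y : L, (∑ i, h i * e.repr (φ x) i * e.repr (φ y) i) =
        ∑ i, g i * e.repr x i * e.repr y i := by
  have hpos i : 0 < g i / h i := Real.div_pos_of_sign_eq (hsign i) (hh i)
  let w i : ℝˣ := Units.mk0 √(g i / h i) (Real.sqrt_pos.2 (hpos i)).ne'
  have hw i j k (a : ℝ) (ha : a ≠ 0) (hk : ⁅e i, e j⁆ = a • e k) : w k = w i * w j := by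
    ext
    rw [Units.val_mul, Units.val_mk0, Units.val_mk0, Units.val_mk0,
      div_eq_div_mul_div_of_div_mul_eq (hh k) (hh i) (hh j) (hratio i j k ⟨a, ha, hk⟩),
      Real.sqrt_mul (hpos i).le]
  refine ⟨e.unitsSMulLieEquiv w he.1 hw,
    fun i => ⟨√(g i / h i), Real.sqrt_pos.2 (hpos i), e.unitsSMulLieEquiv_apply_basis w he.1 hw i⟩,
    fun x y => Finset.sum_congr rfl fun i _ => ?_⟩
  have hsq : h i * (√(g i / h i) * √(g i / h i)) = g i := by
    rw [Real.mul_self_sqrt (hpos i).le, mul_div_cancel₀ _ (hh i)]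
  rw [e.repr_unitsSMulLieEquiv, e.repr_unitsSMulLieEquiv, Units.val_mk0]
  linear_combination e.repr x i * e.repr y i * hsq

/-- If two tuples of nonzero diagonal coefficients have the same signs and give the same
value `g_k/(g_i g_j)` on every nonzero bracket, then the corresponding diagonal metrics
are related by a Lie algebra automorphism which is diagonal with positive entries;
in particular they are isometric. -/
theorem diagonal_metrics_isometric {L : Type} [LieRing L] [LieAlgebra ℝ L]
    [LieRing.IsNilpotent L] {n : ℕ}
    (e : Module.Basis (Fin n) ℝ L) (he : IsNiceBasis e)
    (g h : Fin n → ℝ) (hg : ∀ i, g i ≠ 0) (hh : ∀ i, h i ≠ 0)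
    (hsign : ∀ i, Real.sign (g i) = Real.sign (h i))
    (hratio : ∀ i j k : Fin n, (∃ a : ℝ, a ≠ 0 ∧ ⁅e i, e j⁆ = a • e k) →
      g k / (g i * g j) = h k / (h i * h j)) :
    ∃ φ : L ≃ₗ⁅ℝ⁆ L,
      (∀ i, ∃ d : ℝ, 0 < d ∧ φ (e i) = d • e i) ∧
      ∀ x y : L, (∑ i, h i * e.repr (φ x) i * e.repr (φ y) i) =
        ∑ i, g i * e.repr x i * e.repr y i :=
  diagonal_metrics_isometric_general e he g h hh hsign hratio
end

section
/- Let 𝔤 be a nonabelian real Lie algebra with a nice basis (e_1,…,e_n), and let s be an involution of {1,…,n} with no fixed points such that whenever [e_i,e_j] is a nonzero multiple of e_k, the bracket [e_{s(i)},e_{s(j)}] is a nonzero multiple of e_{s(k)}. Let V₊ be the span of the vectors e_i + e_{s(i)} (1 ≤ i ≤ n) and V₋ the span of the vectors e_i − e_{s(i)} (1 ≤ i ≤ n). Then V₊ and V₋ are not both Lie subalgebras of 𝔤. -/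
namespace Module.Basis

variable {ι R M : Type*} [Ring R] [AddCommGroup M] [Module R M]
  (e : Basis ι R M) {s : ι → ι}

theorem repr_apply_involution_eq_of_mem_span_add (hs : Function.Involutive s) {v : M}
    (hv : v ∈ Submodule.span R (Set.range fun i => e i + e (s i))) (k : ι) :
    e.repr v (s k) = e.repr v k := by
  classical
  induction hv using Submodule.span_induction with
  | mem x hx =>
    obtain ⟨i, rfl⟩ := hx
    simp only [map_add, repr_self, Finsupp.add_apply, Finsupp.single_apply, hs.eq_iff, hs k]
    exact add_comm _ _
  | zero => simp
  | add x y _ _ hx hy => simp [hx, hy]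
  | smul c x _ hx => simp [hx]

theorem repr_apply_involution_eq_neg_of_mem_span_sub (hs : Function.Involutive s) {v : M}
    (hv : v ∈ Submodule.span R (Set.range fun i => e i - e (s i))) (k : ι) :
    e.repr v (s k) = -e.repr v k := by
  classical
  induction hv using Submodule.span_induction with
  | mem x hx =>
    obtain ⟨i, rfl⟩ := hx
    simp only [map_sub, repr_self, Finsupp.sub_apply, Finsupp.single_apply, hs.eq_iff, hs k]
    exact (neg_sub _ _).symm
  | zero => simp
  | add x y _ _ hx hy => simp [hx, hy, add_comm]
  | smul c x _ hx => simp [hx]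

end Module.Basis

theorem Module.Basis.exists_lie_ne_zero {ι R L : Type*} [CommRing R] [LieRing L]
    [LieAlgebra R L] (e : Basis ι R L) (h : ∃ x y : L, ⁅x, y⁆ ≠ 0) :
    ∃ i j, ⁅e i, e j⁆ ≠ 0 := by
  contrapose! h
  have had : (LieAlgebra.ad R L : L →ₗ[R] Module.End R L) = 0 :=
    e.ext fun i => e.ext fun j => h i j
  exact fun x y => congr($had x y)

namespace IsNiceBasis

variable {L ι : Type} [LieRing L] [LieAlgebra ℝ L] {e : Module.Basis ι ℝ L}

theorem repr_lie_eq_zero_of_ne_right (he : IsNiceBasis e) {i j j' k : ι}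
    (h : e.repr ⁅e i, e j⁆ k ≠ 0) (hj : j' ≠ j) : e.repr ⁅e i, e j'⁆ k = 0 := by
  by_contra h'
  exact hj (he.2 i k j' j h' h)

theorem repr_lie_eq_zero_of_ne_left (he : IsNiceBasis e) {i i' j k : ι}
    (h : e.repr ⁅e i, e j⁆ k ≠ 0) (hi : i' ≠ i) : e.repr ⁅e i', e j⁆ k = 0 := by
  rw [← lie_skew] at h ⊢
  simp only [map_neg, Finsupp.neg_apply, neg_ne_zero, neg_eq_zero] at h ⊢
  exact he.repr_lie_eq_zero_of_ne_right h hi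

theorem repr_lie_add_lie_eq_zero (he : IsNiceBasis e) {i i' j j' k : ι}
    (h : e.repr ⁅e i, e j⁆ k ≠ 0) (hi : i' ≠ i) (hj : j' ≠ j) :
    e.repr (⁅e i, e j'⁆ + ⁅e i', e j⁆) k = 0 := by
  rw [map_add, Finsupp.add_apply, he.repr_lie_eq_zero_of_ne_right h hj,
    he.repr_lie_eq_zero_of_ne_left h hi, add_zero]

end IsNiceBasis

/-- For a fixed-point-free diagram involution `s` of a nonabelian nice Lie algebra, the
`+1` and `−1` eigenspaces of the induced involution are not both Lie subalgebras:
the associated almost paracomplex structure is not integrable. -/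
theorem eigenspaces_not_both_subalgebras {L : Type} [LieRing L] [LieAlgebra ℝ L]
    (hnonab : ∃ x y : L, ⁅x, y⁆ ≠ 0) {n : ℕ}
    (e : Module.Basis (Fin n) ℝ L) (he : IsNiceBasis e)
    (s : Fin n → Fin n) (hs : Function.Involutive s) (hsfix : ∀ i, s i ≠ i)
    (hdi : ∀ (i j k : Fin n) (a : ℝ), a ≠ 0 → ⁅e i, e j⁆ = a • e k →
      ∃ b : ℝ, b ≠ 0 ∧ ⁅e (s i), e (s j)⁆ = b • e (s k)) :
    ¬ ((∀ x ∈ Submodule.span ℝ (Set.range fun i => e i + e (s i)),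
          ∀ y ∈ Submodule.span ℝ (Set.range fun i => e i + e (s i)),
            ⁅x, y⁆ ∈ Submodule.span ℝ (Set.range fun i => e i + e (s i))) ∧
        (∀ x ∈ Submodule.span ℝ (Set.range fun i => e i - e (s i)),
          ∀ y ∈ Submodule.span ℝ (Set.range fun i => e i - e (s i)),
            ⁅x, y⁆ ∈ Submodule.span ℝ (Set.range fun i => e i - e (s i)))) := by
  rintro ⟨hplus, hminus⟩
  obtain ⟨i, j, hij⟩ := e.exists_lie_ne_zero hnonab
  obtain ⟨k, a, hk⟩ := he.1 i j
  have ha : a ≠ 0 := by rintro rfl; simp [hk] at hij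
  obtain ⟨b, hb, hsk⟩ := hdi i j k a ha hk
  set u := ⁅e i, e j⁆ + ⁅e (s i), e (s j)⁆
  set w := ⁅e i, e (s j)⁆ + ⁅e (s i), e j⁆
  have hu : e.repr u k = a := by simp [u, hk, hsk, hsfix k]
  have hwk : e.repr w k = 0 :=
    he.repr_lie_add_lie_eq_zero (by simpa [hk] using ha) (hsfix i) (hsfix j)
  have hwsk : e.repr w (s k) = 0 := by
    rw [show w = ⁅e (s i), e j⁆ + ⁅e i, e (s j)⁆ from add_comm _ _]
    exact he.repr_lie_add_lie_eq_zero (by simpa [hsk] using hb) (hsfix i).symm (hsfix j).symm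
  have hplus' : u + w ∈ Submodule.span ℝ (Set.range fun i => e i + e (s i)) := by
    convert hplus _ (Submodule.subset_span ⟨i, rfl⟩) _ (Submodule.subset_span ⟨j, rfl⟩)
      using 1
    simp only [u, w, add_lie, lie_add]
    abel
  have hminus' : u - w ∈ Submodule.span ℝ (Set.range fun i => e i - e (s i)) := by
    convert hminus _ (Submodule.subset_span ⟨i, rfl⟩) _ (Submodule.subset_span ⟨j, rfl⟩)
      using 1
    simp only [u, w, sub_lie, lie_sub]
    abel
  have hcoeff_plus := e.repr_apply_involution_eq_of_mem_span_add hs hplus' k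
  have hcoeff_minus := e.repr_apply_involution_eq_neg_of_mem_span_sub hs hminus' k
  simp only [map_add, map_sub, Finsupp.add_apply, Finsupp.sub_apply, hwk, hwsk, add_zero,
    sub_zero] at hcoeff_plus hcoeff_minus
  exact ha (by linarith)
end
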